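/- arXiv:0708.2347 — 7 statements merged into one kernel-verified Lean document; each statement's English description precedes it below -/
import Mathlib

section
/- For all integers r, s and all natural numbers n, the following identity holds: p·Δ·(Σ_{i=0}^{n} U_{r+2i}·U_{s+2i}) = U_{4n+r+s+2} − U_{r+s−2} − (n+1)·p·q^r·V_{s−r}. (This is the denominator-cleared form of S_n^{(r,s)}(U) = p^{-1}Δ^{-1}[U_{4n+r+s+2} − U_{r+s−2}] − (n+1)Δ^{-1}q^r·V_{s−r}.) -/
/-!
Since `q` is a unit, the recurrence `f (n + 2) = p f (n + 1) - q f n` can be run in both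
directions, so a two-sided solution is determined by `f 0` and `f 1`. Solutions are closed under
shifts, scalar multiples, differences and the reflection `n ↦ q ^ n f (-n)`; hence every identity
between solutions reduces to a check at `n = 0, 1`. This gives the product formula
`Δ U_a U_b = V_{a+b} - q^a V_{b-a}` and `p V_m = U_{m+2} - q² U_{m-2}`. When `q² = 1` the summand
`p Δ U_{r+2i} U_{s+2i}` is therefore `U_{r+s+4i+2} - U_{r+s+4i-2} - p q^r V_{s-r}`, and the sum
telescopes.
-/

variable {R : Type*} [CommRing R]

def IsLucasRecurrence (p : R) (q : Rˣ) (f : ℤ → R) : Prop :=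
  ∀ n, f (n + 2) = p * f (n + 1) - q * f n

namespace IsLucasRecurrence

variable {p : R} {q : Rˣ} {f g : ℤ → R}

theorem ext (hf : IsLucasRecurrence p q f) (hg : IsLucasRecurrence p q g)
    (h0 : f 0 = g 0) (h1 : f 1 = g 1) : f = g := by
  have key : ∀ n : ℤ, f n = g n ∧ f (n + 1) = g (n + 1) := by
    intro n
    induction n using Int.induction_on with
    | zero => exact ⟨h0, by simpa using h1⟩
    | succ n ih =>
      refine ⟨ih.2, ?_⟩
      rw [add_assoc, one_add_one_eq_two, hf, hg, ih.1, ih.2]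
    | pred n ih =>
      refine ⟨?_, by simpa using ih.1⟩
      have hfn := hf (-n - 1)
      have hgn := hg (-n - 1)
      rw [show -(n : ℤ) - 1 + 2 = -n + 1 by ring, show -(n : ℤ) - 1 + 1 = -n by ring] at hfn hgn
      rw [ih.1, ih.2] at hfn
      exact (Units.mul_right_inj q).mp (by linear_combination hfn - hgn)
  exact funext fun n ↦ (key n).1

theorem sub (hf : IsLucasRecurrence p q f) (hg : IsLucasRecurrence p q g) :
    IsLucasRecurrence p q (fun n ↦ f n - g n) := fun n ↦ by
  dsimp only; rw [hf, hg]; ring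

theorem const_mul (c : R) (hf : IsLucasRecurrence p q f) :
    IsLucasRecurrence p q (fun n ↦ c * f n) := fun n ↦ by
  dsimp only; rw [hf]; ring

theorem comp_add (k : ℤ) (hf : IsLucasRecurrence p q f) :
    IsLucasRecurrence p q (fun n ↦ f (n + k)) := fun n ↦ by
  simpa only [add_right_comm] using hf (n + k)

theorem zpow_mul_comp_neg (hf : IsLucasRecurrence p q f) :
    IsLucasRecurrence p q (fun n ↦ ↑(q ^ n) * f (-n)) := fun n ↦ by
  have h := hf (-(n + 2))
  rw [show -(n + 2) + 2 = -n by ring, show -(n + 2) + 1 = -(n + 1) by ring,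
    show n + 2 = n + 1 + 1 by ring] at h
  simp only [show n + 2 = n + 1 + 1 by ring, zpow_add_one, Units.val_mul]
  linear_combination (↑(q ^ n) * ↑q : R) * h

end IsLucasRecurrence

structure IsLucasU (p : R) (q : Rˣ) (U : ℤ → R) : Prop where
  recurrence : IsLucasRecurrence p q U
  apply_zero : U 0 = 0
  apply_one : U 1 = 1

structure IsLucasV (p : R) (q : Rˣ) (V : ℤ → R) : Prop where
  recurrence : IsLucasRecurrence p q V
  apply_zero : V 0 = 2
  apply_one : V 1 = p

variable {p : R} {q : Rˣ} {U V : ℤ → R}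

theorem IsLucasV.zpow_mul_apply_neg (hV : IsLucasV p q V) (n : ℤ) :
    ↑(q ^ n) * V (-n) = V n := by
  refine congrFun (hV.recurrence.zpow_mul_comp_neg.ext hV.recurrence ?_ ?_) n
  · simp
  · have h := hV.recurrence (-1)
    norm_num [hV.apply_zero, hV.apply_one] at h ⊢
    linear_combination h

theorem IsLucasU.add_one_sub_mul_sub_one (hU : IsLucasU p q U) (hV : IsLucasV p q V) (n : ℤ) :
    U (n + 1) - q * U (n - 1) = V n := by
  have h := congrFun (((hU.recurrence.comp_add 1).sub
    ((hU.recurrence.comp_add (-1)).const_mul (q : R))).ext hV.recurrence ?_ ?_) n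
  · simpa [sub_eq_add_neg] using h
  · have h := hU.recurrence (-1)
    norm_num [hU.apply_zero, hU.apply_one, hV.apply_zero] at h ⊢
    linear_combination -h
  · have h := hU.recurrence 0
    norm_num [hU.apply_zero, hU.apply_one, hV.apply_one] at h ⊢
    exact h

theorem IsLucasU.sq_sub_four_mul_mul (hU : IsLucasU p q U) (hV : IsLucasV p q V) (n : ℤ) :
    (p ^ 2 - 4 * q) * U n = V (n + 1) - ↑(q ^ n) * V (1 - n) := by
  have h := congrFun ((hU.recurrence.const_mul (p ^ 2 - 4 * q)).ext
    ((hV.recurrence.comp_add 1).sub (hV.recurrence.comp_add 1).zpow_mul_comp_neg) ?_ ?_) n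
  · simpa [neg_add_eq_sub] using h
  · simp [hU.apply_zero]
  · have h := hV.recurrence 0
    norm_num [hU.apply_one, hV.apply_zero, hV.apply_one] at h ⊢
    linear_combination -h

theorem IsLucasU.sq_sub_four_mul_mul_mul (hU : IsLucasU p q U) (hV : IsLucasV p q V) (a b : ℤ) :
    (p ^ 2 - 4 * q) * (U a * U b) = V (a + b) - ↑(q ^ a) * V (b - a) := by
  have h := congrFun (((hU.recurrence.const_mul (U a)).const_mul (p ^ 2 - 4 * q)).ext
    ((hV.recurrence.comp_add a).sub ((hV.recurrence.comp_add (-a)).const_mul ↑(q ^ a))) ?_ ?_) b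
  · simpa [add_comm, sub_eq_add_neg] using h
  · simp [hU.apply_zero, hV.zpow_mul_apply_neg]
  · simpa [hU.apply_one, add_comm, neg_add_eq_sub] using hU.sq_sub_four_mul_mul hV a

theorem IsLucasU.add_two_sub_sq_mul_sub_two (hU : IsLucasU p q U) (hV : IsLucasV p q V) (n : ℤ) :
    U (n + 2) - ↑q ^ 2 * U (n - 2) = p * V n := by
  have h1 := hU.add_one_sub_mul_sub_one hV (n + 1)
  have h2 := hU.add_one_sub_mul_sub_one hV (n - 1)
  have h3 := hV.recurrence (n - 1)
  ring_nf at h1 h2 h3 ⊢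
  linear_combination h1 + ↑q * h2 + h3

theorem IsLucasU.mul_sum_range_mul_add_two_mul (hU : IsLucasU p q U) (hV : IsLucasV p q V)
    (hq : q ^ 2 = 1) (r s : ℤ) (n : ℕ) :
    p * (p ^ 2 - 4 * q) * ∑ i ∈ Finset.range (n + 1), U (r + 2 * i) * U (s + 2 * i) =
      U (4 * n + r + s + 2) - U (r + s - 2) - ((n : R) + 1) * p * ↑(q ^ r) * V (s - r) := by
  have hq' : (q : R) ^ 2 = 1 := by rw [← Units.val_pow_eq_pow_val, hq, Units.val_one]
  have hterm (i : ℕ) : p * (p ^ 2 - 4 * q) * (U (r + 2 * i) * U (s + 2 * i)) =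
      U (r + s + 4 * (i + 1 : ℕ) - 2) - U (r + s + 4 * i - 2) - p * ↑(q ^ r) * V (s - r) := by
    have hzpow : q ^ (r + 2 * i) = q ^ r := by simp [zpow_add, zpow_mul, hq]
    have h := hU.sq_sub_four_mul_mul_mul hV (r + 2 * i) (s + 2 * i)
    have h' := hU.add_two_sub_sq_mul_sub_two hV (r + s + 4 * i)
    rw [hzpow, show r + 2 * i + (s + 2 * i) = r + s + 4 * i by ring,
      show s + 2 * i - (r + 2 * i) = s - r by ring] at h
    rw [hq', one_mul] at h'
    push_cast
    rw [show r + s + 4 * ((i : ℤ) + 1) - 2 = r + s + 4 * i + 2 by ring]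
    linear_combination p * h - h'
  rw [Finset.mul_sum, Finset.sum_congr rfl fun i _ ↦ hterm i, Finset.sum_sub_distrib,
    Finset.sum_range_sub (fun i ↦ U (r + s + 4 * i - 2)), Finset.sum_const, Finset.card_range]
  push_cast
  ring_nf

theorem Int.val_units_zpow_eq_pow_natAbs (u : ℤˣ) (r : ℤ) :
    ((u ^ r : ℤˣ) : ℤ) = (u : ℤ) ^ r.natAbs := by
  obtain ⟨m, rfl | rfl⟩ := Int.eq_nat_or_neg r <;> simp [zpow_neg]

theorem stmt_0_general (p q : ℤ) (hq : q = 1 ∨ q = -1)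
    (U V : ℤ → ℤ)
    (hU0 : U 0 = 0) (hU1 : U 1 = 1)
    (hUrec : ∀ n : ℤ, U n = p * U (n - 1) - q * U (n - 2))
    (hV0 : V 0 = 2) (hV1 : V 1 = p)
    (hVrec : ∀ n : ℤ, V n = p * V (n - 1) - q * V (n - 2))
    (r s : ℤ) (n : ℕ) :
    p * (p ^ 2 - 4 * q) * (∑ i ∈ Finset.range (n + 1), U (r + 2 * i) * U (s + 2 * i)) =
      U (4 * n + r + s + 2) - U (r + s - 2) - ((n : ℤ) + 1) * p * q ^ r.natAbs * V (s - r) := by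
  obtain ⟨q, rfl⟩ : IsUnit q := Int.isUnit_iff.mpr hq
  have hrec (f : ℤ → ℤ) (hf : ∀ n : ℤ, f n = p * f (n - 1) - q * f (n - 2)) :
      IsLucasRecurrence p q f := fun n ↦ by
    simpa only [add_sub_cancel_right, show n + 2 - 1 = n + 1 by ring] using hf (n + 2)
  rw [← Int.val_units_zpow_eq_pow_natAbs]
  exact IsLucasU.mul_sum_range_mul_add_two_mul ⟨hrec U hUrec, hU0, hU1⟩ ⟨hrec V hVrec, hV0, hV1⟩
    (Int.units_sq q) r s n

theorem stmt_0 (p q : ℤ) (hp : p ≠ 0) (hq : q = 1 ∨ q = -1)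
    (hΔ : p ^ 2 - 4 * q ≠ 0)
    (U V : ℤ → ℤ)
    (hU0 : U 0 = 0) (hU1 : U 1 = 1)
    (hUrec : ∀ n : ℤ, U n = p * U (n - 1) - q * U (n - 2))
    (hV0 : V 0 = 2) (hV1 : V 1 = p)
    (hVrec : ∀ n : ℤ, V n = p * V (n - 1) - q * V (n - 2))
    (r s : ℤ) (n : ℕ) :
    p * (p ^ 2 - 4 * q) * (∑ i ∈ Finset.range (n + 1), U (r + 2 * i) * U (s + 2 * i)) =
      U (4 * n + r + s + 2) - U (r + s - 2) - ((n : ℤ) + 1) * p * q ^ r.natAbs * V (s - r) :=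
  stmt_0_general p q hq U V hU0 hU1 hUrec hV0 hV1 hVrec r s n
end

section
/- For all integers r, s and all natural numbers n, the following identity holds: p·(Σ_{i=0}^{n} V_{r+2i}·V_{s+2i}) = U_{4n+r+s+2} − U_{r+s−2} + (n+1)·p·q^r·V_{s−r}. -/
/-!
Two-sided solutions of `x n = p * x (n - 1) - q * x (n - 2)` with `q` a unit are determined by
two consecutive values, and they are closed under shifts, linear combinations and the twisted
reflection `n ↦ q ^ n * x (-n)`. Comparing solutions in `b` gives the product formula
`V a * V b = V (a + b) + q ^ b * V (a - b)`, and comparing them in `m` gives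
`p * V m = U (m + 2) - q ^ 2 * U (m - 2)`. When `q ^ 2 = 1`, the factor `q ^ (r + 2 i)` is `q ^ r`,
so each summand `p * V (r + 2 i) * V (s + 2 i)` is `U (r + s + 4 i + 2) - U (r + s + 4 i - 2)`
plus the constant `p * q ^ r * V (s - r)`, and the sum telescopes.
-/

section

variable {R : Type*} [CommRing R]

def IsLucasRec (p q : R) (f : ℤ → R) : Prop :=
  ∀ n, f n = p * f (n - 1) - q * f (n - 2)

namespace IsLucasRec

variable {p q : R} {f g : ℤ → R}

theorem ext (hq : IsUnit q) (hf : IsLucasRec p q f) (hg : IsLucasRec p q g)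
    (h0 : f 0 = g 0) (h1 : f 1 = g 1) : f = g := by
  suffices h : ∀ n : ℤ, f n = g n ∧ f (n + 1) = g (n + 1) from funext fun n => (h n).1
  intro n
  induction n using Int.induction_on with
  | zero => simpa using ⟨h0, h1⟩
  | succ k ih =>
    refine ⟨ih.2, ?_⟩
    rw [hf, hg, add_sub_cancel_right, show (k : ℤ) + 1 + 1 - 2 = k by ring, ih.1, ih.2]
  | pred k ih =>
    refine ⟨?_, by simpa using ih.1⟩
    have hf' := hf (-k + 1)
    have hg' := hg (-k + 1)
    rw [show -(k : ℤ) + 1 - 2 = -k - 1 by ring, add_sub_cancel_right] at hf' hg'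
    apply hq.mul_left_cancel
    linear_combination hf' - hg' - ih.2 + p * ih.1

theorem const_mul (hf : IsLucasRec p q f) (c : R) : IsLucasRec p q (fun n => c * f n) :=
  fun n => by dsimp only; rw [hf n]; ring

theorem add (hf : IsLucasRec p q f) (hg : IsLucasRec p q g) :
    IsLucasRec p q (fun n => f n + g n) :=
  fun n => by dsimp only; rw [hf n, hg n]; ring

theorem sub (hf : IsLucasRec p q f) (hg : IsLucasRec p q g) :
    IsLucasRec p q (fun n => f n - g n) :=
  fun n => by dsimp only; rw [hf n, hg n]; ring

theorem comp_add_const (hf : IsLucasRec p q f) (k : ℤ) : IsLucasRec p q (fun n => f (n + k)) :=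
  fun n => by dsimp only; rw [hf (n + k), sub_add_eq_add_sub, sub_add_eq_add_sub]

theorem comp_neg {u : Rˣ} (hf : IsLucasRec p u f) :
    IsLucasRec (↑u⁻¹ * p) ↑u⁻¹ (fun n => f (-n)) := fun n => by
  have h := hf (-n + 2)
  rw [show -n + 2 - 1 = -(n - 1) by ring, show -n + 2 - 2 = -n by ring] at h
  dsimp only
  rw [show -(n - 2) = -n + 2 by ring, h]
  linear_combination -f (-n) * u.inv_mul

theorem units_zpow_mul (c : Rˣ) (hf : IsLucasRec p q f) :
    IsLucasRec (c * p) (c ^ 2 * q) (fun n => ↑(c ^ n) * f n) := fun n => by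
  dsimp only
  rw [hf n, show c ^ n = c * c ^ (n - 1) by rw [← zpow_one_add]; ring_nf,
    show c ^ (n - 1) = c * c ^ (n - 2) by rw [← zpow_one_add]; ring_nf]
  push_cast
  ring

theorem units_zpow_mul_comp_neg {u : Rˣ} (hf : IsLucasRec p u f) :
    IsLucasRec p u (fun n => ↑(u ^ n) * f (-n)) := by
  have h := hf.comp_neg.units_zpow_mul u
  rwa [u.mul_inv_cancel_left, sq, mul_assoc, u.mul_inv, mul_one] at h

end IsLucasRec

variable {p : R} {u : Rˣ} {U V : ℤ → R}

theorem lucasV_mul_lucasV (hV : IsLucasRec p u V) (hV0 : V 0 = 2) (hV1 : V 1 = p) (a b : ℤ) :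
    V a * V b = V (a + b) + ↑(u ^ b) * V (a - b) := by
  have hshift : IsLucasRec p u (fun n => V (n + a)) := hV.comp_add_const a
  have key := (hV.const_mul (V a)).ext u.isUnit (hshift.add hshift.units_zpow_mul_comp_neg)
    (by simp [hV0]; ring) (by
      have h := hV (1 + a)
      rw [show 1 + a - 1 = a by ring, show 1 + a - 2 = -1 + a by ring] at h
      simp only [hV1, zpow_one]
      linear_combination -h)
  simpa [add_comm, sub_eq_neg_add] using congrFun key b

theorem mul_lucasV_eq_lucasU_sub (hU : IsLucasRec p u U) (hU0 : U 0 = 0) (hU1 : U 1 = 1)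
    (hV : IsLucasRec p u V) (hV0 : V 0 = 2) (hV1 : V 1 = p) (m : ℤ) :
    p * V m = U (m + 2) - ↑u ^ 2 * U (m - 2) := by
  have hrhs := (hU.comp_add_const 2).sub ((hU.comp_add_const (-2)).const_mul (↑u ^ 2))
  refine congrFun ((hV.const_mul p).ext u.isUnit hrhs ?_ ?_) m
  · have h2 := hU 2
    have h1 := hU 1
    have h0 := hU 0
    norm_num [hU0, hU1, hV0] at h2 h1 h0 ⊢
    linear_combination -h2 + ↑u * h0 + p * h1
  · have h3 := hU 3
    have h2 := hU 2
    have h1 := hU 1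
    norm_num [hU0, hU1, hV1] at h3 h2 h1 ⊢
    linear_combination -h3 - p * h2 + ↑u * h1

theorem mul_sum_lucasV_mul_lucasV (hu : u ^ 2 = 1)
    (hU : IsLucasRec p u U) (hU0 : U 0 = 0) (hU1 : U 1 = 1)
    (hV : IsLucasRec p u V) (hV0 : V 0 = 2) (hV1 : V 1 = p) (r s : ℤ) (n : ℕ) :
    p * ∑ i ∈ Finset.range (n + 1), V (r + 2 * i) * V (s + 2 * i) =
      U (4 * n + r + s + 2) - U (r + s - 2) + (n + 1) * p * ↑(u ^ r) * V (s - r) := by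
  have hu' : (u : R) ^ 2 = 1 := by rw [← Units.val_pow_eq_pow_val, hu, Units.val_one]
  have hterm (i : ℕ) : p * (V (r + 2 * i) * V (s + 2 * i)) =
      (U (r + s - 2 + 4 * (i + 1 : ℕ)) - U (r + s - 2 + 4 * i)) + p * ↑(u ^ r) * V (s - r) := by
    have hpow : u ^ (r + 2 * i) = u ^ r := by
      rw [zpow_add, zpow_mul, zpow_ofNat, hu, one_zpow, mul_one]
    rw [mul_comm (V _), lucasV_mul_lucasV hV hV0 hV1, hpow, mul_add,
      mul_lucasV_eq_lucasU_sub hU hU0 hU1 hV hV0 hV1, hu', one_mul,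
      show s + 2 * i + (r + 2 * i) + 2 = r + s - 2 + 4 * (i + 1 : ℕ) by push_cast; ring,
      show s + 2 * i + (r + 2 * i) - 2 = r + s - 2 + 4 * i by ring,
      show s + 2 * i - (r + 2 * i) = s - r by ring]
    ring
  rw [Finset.mul_sum, Finset.sum_congr rfl fun i _ => hterm i, Finset.sum_add_distrib,
    Finset.sum_range_sub (fun i => U (r + s - 2 + 4 * i)), Finset.sum_const, Finset.card_range]
  rw [show r + s - 2 + 4 * ((n + 1 : ℕ) : ℤ) = 4 * n + r + s + 2 by push_cast; ring,
    Nat.cast_zero, mul_zero, add_zero, nsmul_eq_mul]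
  push_cast
  ring

end

theorem Int.coe_units_zpow_eq_pow_natAbs (u : ℤˣ) (r : ℤ) : ((u ^ r : ℤˣ) : ℤ) = u ^ r.natAbs := by
  obtain ⟨k, rfl | rfl⟩ := Int.eq_nat_or_neg r <;> simp [Int.units_inv_eq_self]

theorem stmt_1_general (p q : ℤ) (hq : q = 1 ∨ q = -1)
    (U V : ℤ → ℤ)
    (hU0 : U 0 = 0) (hU1 : U 1 = 1)
    (hUrec : ∀ n : ℤ, U n = p * U (n - 1) - q * U (n - 2))
    (hV0 : V 0 = 2) (hV1 : V 1 = p)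
    (hVrec : ∀ n : ℤ, V n = p * V (n - 1) - q * V (n - 2))
    (r s : ℤ) (n : ℕ) :
    p * (∑ i ∈ Finset.range (n + 1), V (r + 2 * i) * V (s + 2 * i)) =
      U (4 * n + r + s + 2) - U (r + s - 2) + ((n : ℤ) + 1) * p * q ^ r.natAbs * V (s - r) := by
  obtain ⟨u, rfl⟩ : IsUnit q := by rcases hq with rfl | rfl <;> simp
  rw [mul_sum_lucasV_mul_lucasV (Int.units_sq u) hUrec hU0 hU1 hVrec hV0 hV1,
    Int.coe_units_zpow_eq_pow_natAbs]

theorem stmt_1 (p q : ℤ) (hp : p ≠ 0) (hq : q = 1 ∨ q = -1)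
    (hΔ : p ^ 2 - 4 * q ≠ 0)
    (U V : ℤ → ℤ)
    (hU0 : U 0 = 0) (hU1 : U 1 = 1)
    (hUrec : ∀ n : ℤ, U n = p * U (n - 1) - q * U (n - 2))
    (hV0 : V 0 = 2) (hV1 : V 1 = p)
    (hVrec : ∀ n : ℤ, V n = p * V (n - 1) - q * V (n - 2))
    (r s : ℤ) (n : ℕ) :
    p * (∑ i ∈ Finset.range (n + 1), V (r + 2 * i) * V (s + 2 * i)) =
      U (4 * n + r + s + 2) - U (r + s - 2) + ((n : ℤ) + 1) * p * q ^ r.natAbs * V (s - r) :=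
  stmt_1_general p q hq U V hU0 hU1 hUrec hV0 hV1 hVrec r s n
end

section
/- For all integers r, s and all natural numbers n, the following identity holds: Δ·V_2·(Σ_{i=0}^{n} (−1)^i·U_{r+2i}·U_{s+2i}) = V_{r+s−2} + (−1)^n·V_{4n+r+s+2} − ε_n·V_2·q^r·V_{s−r}, where ε_n = 1 if n is even and ε_n = 0 if n is odd. -/
/-!
`U` and `V` solve the same recurrence `f n = p f (n-1) - q f (n-2)`, and since `q` is a unit a
solution on `ℤ` is determined by its values at `0` and `1`. Checking two initial values therefore
gives `Δ U_m U_k = V_{m+k} - q^k V_{m-k}` (the map `k ↦ q^k f (m-k)` preserves solutions) and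
`V_2 V_m = V_{m+2} + q^2 V_{m-2}`. With `q^2 = 1` these turn the `i`-th summand, times `Δ V_2`,
into `(-1)^i (W_{i+1} + W_i) - (-1)^i V_2 q^r V_{s-r}` with `W_i = V_{r+s+4i-2}`: the first part
telescopes and the signs of the second sum to `ε_n`.
-/

open Finset

variable {R : Type*} [CommRing R]

def LucasRec (p q : R) (f : ℤ → R) : Prop :=
  ∀ n : ℤ, f n = p * f (n - 1) - q * f (n - 2)

namespace LucasRec

variable {p q : R} {f g : ℤ → R}

theorem add_two (hf : LucasRec p q f) (n : ℤ) : f (n + 2) = p * f (n + 1) - q * f n := by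
  simpa only [add_sub_cancel_right, add_sub_assoc, sub_self, add_zero,
    show (2 : ℤ) - 1 = 1 by norm_num] using hf (n + 2)

theorem comp_add (hf : LucasRec p q f) (c : ℤ) : LucasRec p q (fun n => f (n + c)) := fun n => by
  simpa only [sub_add_eq_add_sub] using hf (n + c)

theorem sub (hf : LucasRec p q f) (hg : LucasRec p q g) : LucasRec p q (fun n => f n - g n) :=
  fun n => by dsimp only; rw [hf n, hg n]; ring

theorem add (hf : LucasRec p q f) (hg : LucasRec p q g) : LucasRec p q (fun n => f n + g n) :=
  fun n => by dsimp only; rw [hf n, hg n]; ring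

theorem const_mul (hf : LucasRec p q f) (c : R) : LucasRec p q (fun n => c * f n) :=
  fun n => by dsimp only; rw [hf n]; ring

theorem reflect {u : Rˣ} (hf : LucasRec p u f) (m : ℤ) :
    LucasRec p u (fun k => ((u ^ k : Rˣ) : R) * f (m - k)) := fun n => by
  have hu : ((u ^ n : Rˣ) : R) = (u ^ (n - 2) : Rˣ) * u * u := by
    rw [← Units.val_mul, ← Units.val_mul, ← zpow_add_one, ← zpow_add_one]; ring_nf
  have hu' : ((u ^ (n - 1) : Rˣ) : R) = (u ^ (n - 2) : Rˣ) * u := by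
    rw [← Units.val_mul, ← zpow_add_one]; ring_nf
  have h := hf.add_two (m - n)
  rw [show m - n + 2 = m - (n - 2) by ring, show m - n + 1 = m - (n - 1) by ring] at h
  dsimp only
  rw [hu, hu']
  linear_combination ((u ^ (n - 2) : Rˣ) * (u : R)) * h

theorem eq_zero {u : Rˣ} (hf : LucasRec p u f) (h0 : f 0 = 0) (h1 : f 1 = 0) : f = 0 := by
  suffices ∀ n : ℤ, f n = 0 ∧ f (n + 1) = 0 from funext fun n => (this n).1
  intro n
  induction n using Int.induction_on with
  | zero => simpa using ⟨h0, h1⟩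
  | succ k ih =>
    exact ⟨ih.2, by rw [add_assoc, one_add_one_eq_two, hf.add_two, ih.1, ih.2]; ring⟩
  | pred k ih =>
    refine ⟨?_, by simpa using ih.1⟩
    have h := hf.add_two (-k - 1)
    rw [show -(k : ℤ) - 1 + 2 = -k + 1 by ring, show -(k : ℤ) - 1 + 1 = -k by ring,
      ih.1, ih.2] at h
    simpa using h

theorem ext {u : Rˣ} (hf : LucasRec p u f) (hg : LucasRec p u g) (h0 : f 0 = g 0)
    (h1 : f 1 = g 1) : f = g :=
  sub_eq_zero.1 (hf.sub hg |>.eq_zero (sub_eq_zero.2 h0) (sub_eq_zero.2 h1))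

end LucasRec

theorem sum_range_succ_neg_one_pow_mul_add (W : ℕ → R) (n : ℕ) :
    ∑ i ∈ range (n + 1), (-1) ^ i * (W (i + 1) + W i) = W 0 + (-1) ^ n * W (n + 1) := by
  induction n with
  | zero => simp [add_comm]
  | succ n ih => rw [sum_range_succ, ih, pow_succ]; ring

theorem sum_range_succ_neg_one_pow (n : ℕ) :
    ∑ i ∈ range (n + 1), (-1 : R) ^ i = if Even n then 1 else 0 := by
  induction n with
  | zero => simp
  | succ n ih =>
    rw [sum_range_succ, ih]
    by_cases hn : Even n <;> simp [hn, Nat.even_add_one]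

theorem zpow_natAbs_of_sq_eq_one {G : Type*} [Group G] {a : G} (ha : a ^ 2 = 1) (n : ℤ) :
    a ^ n.natAbs = a ^ n := by
  have ha' : a⁻¹ = a := inv_eq_of_mul_eq_one_right (by rw [← sq, ha])
  obtain ⟨k, rfl | rfl⟩ := Int.eq_nat_or_neg n <;> simp [← inv_pow, ha']

section Lucas

variable {p : R} {u : Rˣ} {U V : ℤ → R}

theorem lucas_neg_one (hV : LucasRec p u V) (hV0 : V 0 = 2) (hV1 : V 1 = p) : u * V (-1) = p := by
  linear_combination (norm := ring_nf) hV 1 + p * hV0 - hV1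

theorem lucas_two (hV : LucasRec p u V) (hV0 : V 0 = 2) (hV1 : V 1 = p) : V 2 = p ^ 2 - 2 * u := by
  linear_combination (norm := ring_nf) hV 2 + p * hV1 - u * hV0

theorem lucas_neg_two (hV : LucasRec p u V) (hV0 : V 0 = 2) (hV1 : V 1 = p) :
    (u : R) ^ 2 * V (-2) = V 2 := by
  linear_combination (norm := ring_nf)
    u * hV 0 - u * hV0 + p * lucas_neg_one hV hV0 hV1 - lucas_two hV hV0 hV1

theorem delta_mul_fib (hU : LucasRec p u U) (hU0 : U 0 = 0) (hU1 : U 1 = 1)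
    (hV : LucasRec p u V) (hV0 : V 0 = 2) (hV1 : V 1 = p) (m : ℤ) :
    (p ^ 2 - 4 * u) * U m = V (m + 1) - u * V (m - 1) := by
  refine congrFun (LucasRec.ext (hU.const_mul _)
    ((hV.comp_add 1).sub ((hV.comp_add (-1)).const_mul u)) ?_ ?_) m
  · linear_combination (norm := ring_nf) (p ^ 2 - 4 * u) * hU0 - hV1 + lucas_neg_one hV hV0 hV1
  · linear_combination (norm := ring_nf) (p ^ 2 - 4 * u) * hU1 - lucas_two hV hV0 hV1 + u * hV0

theorem delta_mul_fib_mul_fib (hU : LucasRec p u U) (hU0 : U 0 = 0) (hU1 : U 1 = 1)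
    (hV : LucasRec p u V) (hV0 : V 0 = 2) (hV1 : V 1 = p) (m k : ℤ) :
    (p ^ 2 - 4 * u) * U m * U k = V (m + k) - (u ^ k : Rˣ) * V (m - k) := by
  rw [add_comm m k]
  refine congrFun (LucasRec.ext (hU.const_mul _) ((hV.comp_add m).sub (hV.reflect m)) ?_ ?_) k
  · simp [hU0]
  · simpa [hU1, add_comm] using delta_mul_fib hU hU0 hU1 hV hV0 hV1 m

theorem lucas_two_mul (hV : LucasRec p u V) (hV0 : V 0 = 2) (hV1 : V 1 = p) (m : ℤ) :
    V 2 * V m = V (m + 2) + u ^ 2 * V (m - 2) := by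
  refine congrFun (LucasRec.ext (hV.const_mul _)
    ((hV.comp_add 2).add ((hV.comp_add (-2)).const_mul _)) ?_ ?_) m
  · linear_combination (norm := ring_nf) V 2 * hV0 - lucas_neg_two hV hV0 hV1
  · linear_combination (norm := ring_nf)
      V 2 * hV1 - hV.add_two 1 - u * lucas_neg_one hV hV0 hV1 + u * hV1

theorem delta_mul_lucas_two_mul_fib_mul_fib
    (hU : LucasRec p u U) (hU0 : U 0 = 0) (hU1 : U 1 = 1)
    (hV : LucasRec p u V) (hV0 : V 0 = 2) (hV1 : V 1 = p) (a b : ℤ) :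
    (p ^ 2 - 4 * u) * V 2 * (U a * U b) =
      V (a + b + 2) + u ^ 2 * V (a + b - 2) - V 2 * (u ^ a : Rˣ) * V (b - a) := by
  linear_combination (norm := ring_nf) V 2 * delta_mul_fib_mul_fib hU hU0 hU1 hV hV0 hV1 b a +
    lucas_two_mul hV hV0 hV1 (a + b)

theorem lucas_alternating_sum_fib_mul_fib (hu : u ^ 2 = 1)
    (hU : LucasRec p u U) (hU0 : U 0 = 0) (hU1 : U 1 = 1)
    (hV : LucasRec p u V) (hV0 : V 0 = 2) (hV1 : V 1 = p) (r s : ℤ) (n : ℕ) :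
    (p ^ 2 - 4 * u) * V 2 *
        (∑ i ∈ range (n + 1), (-1 : R) ^ i * (U (r + 2 * i) * U (s + 2 * i))) =
      V (r + s - 2) + (-1) ^ n * V (4 * n + r + s + 2) -
        (if Even n then 1 else 0) * V 2 * (u ^ r : Rˣ) * V (s - r) := by
  have hu' : (u : R) ^ 2 = 1 := by rw [← Units.val_pow_eq_pow_val, hu, Units.val_one]
  have hterm (i : ℕ) : (p ^ 2 - 4 * u) * V 2 * ((-1 : R) ^ i * (U (r + 2 * i) * U (s + 2 * i))) =
      (-1) ^ i * (V (r + s + 4 * (i + 1 : ℕ) - 2) + V (r + s + 4 * i - 2)) -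
        (-1) ^ i * (V 2 * (u ^ r : Rˣ) * V (s - r)) := by
    have hui : u ^ (r + 2 * i) = u ^ r := by
      rw [zpow_add, zpow_mul, zpow_two, ← sq, hu, one_zpow, mul_one]
    rw [mul_left_comm, delta_mul_lucas_two_mul_fib_mul_fib hU hU0 hU1 hV hV0 hV1, hui, hu']
    push_cast
    ring_nf
  rw [mul_sum, sum_congr rfl fun i _ => hterm i, sum_sub_distrib, ← sum_mul,
    sum_range_succ_neg_one_pow_mul_add (fun i => V (r + s + 4 * i - 2)),
    sum_range_succ_neg_one_pow]
  push_cast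
  ring_nf

end Lucas

theorem stmt_3_general (p q : ℤ) (hq : q = 1 ∨ q = -1)
    (U V : ℤ → ℤ)
    (hU0 : U 0 = 0) (hU1 : U 1 = 1)
    (hUrec : ∀ n : ℤ, U n = p * U (n - 1) - q * U (n - 2))
    (hV0 : V 0 = 2) (hV1 : V 1 = p)
    (hVrec : ∀ n : ℤ, V n = p * V (n - 1) - q * V (n - 2))
    (r s : ℤ) (n : ℕ) :
    (p ^ 2 - 4 * q) * V 2 * (∑ i ∈ Finset.range (n + 1), (-1 : ℤ) ^ i * (U (r + 2 * i) * U (s + 2 * i))) =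
      V (r + s - 2) + (-1 : ℤ) ^ n * V (4 * n + r + s + 2) -
        (if Even n then (1 : ℤ) else 0) * V 2 * q ^ r.natAbs * V (s - r) := by
  obtain ⟨u, rfl⟩ : IsUnit q := Int.isUnit_iff.2 hq
  rw [← Units.val_pow_eq_pow_val, zpow_natAbs_of_sq_eq_one (Int.units_sq u)]
  exact lucas_alternating_sum_fib_mul_fib (Int.units_sq u) hUrec hU0 hU1 hVrec hV0 hV1 r s n

theorem stmt_3 (p q : ℤ) (hp : p ≠ 0) (hq : q = 1 ∨ q = -1)
    (hΔ : p ^ 2 - 4 * q ≠ 0)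
    (U V : ℤ → ℤ)
    (hU0 : U 0 = 0) (hU1 : U 1 = 1)
    (hUrec : ∀ n : ℤ, U n = p * U (n - 1) - q * U (n - 2))
    (hV0 : V 0 = 2) (hV1 : V 1 = p)
    (hVrec : ∀ n : ℤ, V n = p * V (n - 1) - q * V (n - 2))
    (r s : ℤ) (n : ℕ) :
    (p ^ 2 - 4 * q) * V 2 * (∑ i ∈ Finset.range (n + 1), (-1 : ℤ) ^ i * (U (r + 2 * i) * U (s + 2 * i))) =
      V (r + s - 2) + (-1 : ℤ) ^ n * V (4 * n + r + s + 2) -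
        (if Even n then (1 : ℤ) else 0) * V 2 * q ^ r.natAbs * V (s - r) :=
  stmt_3_general p q hq U V hU0 hU1 hUrec hV0 hV1 hVrec r s n
end

section
/- For all integers r, s and all natural numbers n, the following identity holds: Σ_{i=0}^{n} U_{r+2i}·V_{s+2i} = a_{n+1}·U_{2n+r+s} − (n+1)·q^r·U_{s−r}. -/
/-!
Two-sided sequences satisfying `x (n + 2) = p * x (n + 1) - q * x n` with `q` invertible are
determined by two consecutive values, so identities between them are checked on `0` and `1`.
This gives the product formula `U t * V s = U (t + s) - q ^ |t| * U (s - t)`, which turns the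
sum into `∑ U (r + s + 4 i)` minus `n + 1` copies of `q ^ |r| * U (s - r)`, and the identity
`U (x + 2) * U y - U x * U (y - 2) = p * U (x + y)`, which telescopes
`p * ∑_{i ≤ n} U (c + 4 i)` into `U (2 n + 2) * U (c + 2 n)`. Cancelling `p = U 2` gives the claim.
-/

theorem pow_natAbs_add_two_mul {M : Type*} [Monoid M] {q : M} (hq : q ^ 2 = 1) (x c : ℤ) :
    q ^ (x + 2 * c).natAbs = q ^ x.natAbs := by
  rw [pow_eq_pow_mod _ hq, pow_eq_pow_mod x.natAbs hq]
  congr 1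
  omega

theorem pow_natAbs_add_one {M : Type*} [Monoid M] {q : M} (hq : q ^ 2 = 1) (x : ℤ) :
    q ^ (x + 1).natAbs = q * q ^ x.natAbs := by
  rw [← pow_succ', pow_eq_pow_mod _ hq, pow_eq_pow_mod (x.natAbs + 1) hq]
  congr 1
  omega

section

variable {R : Type*} [CommRing R]

def SatisfiesLucasRec (p q : R) (f : ℤ → R) : Prop :=
  ∀ n, f (n + 2) = p * f (n + 1) - q * f n

structure IsLucasFirstKind (p q : R) (U : ℤ → R) : Prop where
  recurrence : SatisfiesLucasRec p q U
  zero : U 0 = 0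
  one : U 1 = 1

structure IsLucasSecondKind (p q : R) (V : ℤ → R) : Prop where
  recurrence : SatisfiesLucasRec p q V
  zero : V 0 = 2
  one : V 1 = p

variable {p q : R} {f g U V : ℤ → R}

namespace SatisfiesLucasRec

theorem of_forall_eq_sub (h : ∀ n, f n = p * f (n - 1) - q * f (n - 2)) :
    SatisfiesLucasRec p q f := fun n => by
  convert h (n + 2) using 3 <;> ring_nf

theorem ext (hq : IsUnit q) (hf : SatisfiesLucasRec p q f) (hg : SatisfiesLucasRec p q g)
    (h0 : f 0 = g 0) (h1 : f 1 = g 1) : f = g := by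
  suffices h : ∀ n : ℤ, f n = g n ∧ f (n + 1) = g (n + 1) from funext fun n => (h n).1
  intro n
  induction n using Int.induction_on with
  | zero => simpa using ⟨h0, h1⟩
  | succ i ih => exact ⟨ih.2, by rw [add_assoc, one_add_one_eq_two, hf, hg, ih.1, ih.2]⟩
  | pred i ih =>
    have hi : -(i : ℤ) = -i - 1 + 1 := by ring
    generalize -(i : ℤ) - 1 = m at hi ⊢
    rw [hi, add_assoc, one_add_one_eq_two] at ih
    -- the recurrence runs backwards because `q` is invertible
    refine ⟨hq.mul_left_cancel ?_, ih.1⟩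
    linear_combination hf m - hg m - ih.2 + p * ih.1

end SatisfiesLucasRec

namespace IsLucasFirstKind

theorem apply_two (hU : IsLucasFirstKind p q U) : U 2 = p := by
  simpa [hU.zero, hU.one] using hU.recurrence 0

theorem apply_neg_one (hq : q ^ 2 = 1) (hU : IsLucasFirstKind p q U) : U (-1) = -q := by
  have h := hU.recurrence (-1)
  norm_num [hU.zero, hU.one] at h
  linear_combination q * h - U (-1) * hq

theorem apply_neg_two (hq : q ^ 2 = 1) (hU : IsLucasFirstKind p q U) : U (-2) = -p := by
  have h := hU.recurrence (-2)
  norm_num [hU.zero, hU.apply_neg_one hq] at h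
  linear_combination q * h - (p + U (-2)) * hq

theorem add_two_mul_sub_mul (hq : q ^ 2 = 1) (hU : IsLucasFirstKind p q U) (x y : ℤ) :
    U (x + 2) * U y - U x * U (y - 2) = p * U (x + y) := by
  have hrec := hU.recurrence
  refine congrFun (SatisfiesLucasRec.ext (p := p) (IsUnit.of_pow_eq_one hq two_ne_zero)
    (f := fun y => U (x + 2) * U y - U x * U (y - 2)) (g := fun y => p * U (x + y))
    (fun n => ?_) (fun n => ?_) ?_ ?_) y
  · linear_combination (norm := ring_nf) U (x + 2) * hrec n - U x * hrec (n - 2)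
  · linear_combination (norm := ring_nf) p * hrec (x + n)
  · norm_num [hU.zero, hU.apply_neg_two hq, mul_comm]
  · norm_num [hU.one, hU.apply_neg_one hq]
    linear_combination hrec x

theorem mul_sum_range_add_four_mul (hq : q ^ 2 = 1) (hU : IsLucasFirstKind p q U) (c : ℤ)
    (n : ℕ) : p * ∑ i ∈ Finset.range (n + 1), U (c + 4 * i) = U (2 * (n + 1)) * U (c + 2 * n) := by
  induction n with
  | zero => simp [hU.apply_two]
  | succ n ih =>
    rw [Finset.sum_range_succ, mul_add, ih]
    push_cast
    linear_combination (norm := ring_nf) -hU.add_two_mul_sub_mul hq (2 * n + 2) (c + 2 * n + 2)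

end IsLucasFirstKind

theorem IsLucasSecondKind.apply_eq (hq : q ^ 2 = 1) (hU : IsLucasFirstKind p q U)
    (hV : IsLucasSecondKind p q V) (t : ℤ) : V t = U (t + 1) - q * U (t - 1) := by
  have hrec := hU.recurrence
  refine congrFun (SatisfiesLucasRec.ext (IsUnit.of_pow_eq_one hq two_ne_zero) hV.recurrence
    (g := fun t => U (t + 1) - q * U (t - 1)) (fun n => ?_) ?_ ?_) t
  · linear_combination (norm := ring_nf) hrec (n + 1) - q * hrec (n - 1)
  · norm_num [hV.zero, hU.one, hU.apply_neg_one hq]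
    linear_combination -hq
  · norm_num [hV.one, hU.zero, hU.apply_two]

/-- As `q ^ 2 = 1`, `q ^ t.natAbs` plays the role of `q ^ t` in the usual formula. -/
theorem IsLucasFirstKind.mul_second_kind (hq : q ^ 2 = 1) (hU : IsLucasFirstKind p q U)
    (hV : IsLucasSecondKind p q V) (t s : ℤ) :
    U t * V s = U (t + s) - q ^ t.natAbs * U (s - t) := by
  have hrec := hU.recurrence
  refine congrFun (SatisfiesLucasRec.ext (p := p) (IsUnit.of_pow_eq_one hq two_ne_zero)
    (f := fun t => U t * V s) (g := fun t => U (t + s) - q ^ t.natAbs * U (s - t))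
    (fun n => ?_) (fun n => ?_) ?_ ?_) t
  · linear_combination V s * hrec n
  · have h2 : q ^ (n + 2).natAbs = q ^ n.natAbs := by
      simpa using pow_natAbs_add_two_mul hq n 1
    simp only [h2, pow_natAbs_add_one hq]
    linear_combination (norm := ring_nf) hrec (n + s) - q * q ^ n.natAbs * hrec (s - n - 2)
      + q ^ n.natAbs * U (s - n - 2) * hq
  · simp [hU.zero]
  · simp [hU.one, hV.apply_eq hq hU, add_comm]

theorem IsLucasFirstKind.sum_mul_second_kind (hq : q ^ 2 = 1) (hU : IsLucasFirstKind p q U)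
    (hV : IsLucasSecondKind p q V) (r s : ℤ) (n : ℕ) :
    ∑ i ∈ Finset.range (n + 1), U (r + 2 * i) * V (s + 2 * i) =
      ∑ i ∈ Finset.range (n + 1), U (r + s + 4 * i) - (n + 1) * q ^ r.natAbs * U (s - r) := by
  calc ∑ i ∈ Finset.range (n + 1), U (r + 2 * i) * V (s + 2 * i)
      = ∑ i ∈ Finset.range (n + 1), (U (r + s + 4 * i) - q ^ r.natAbs * U (s - r)) := by
        refine Finset.sum_congr rfl fun i _ => ?_
        rw [hU.mul_second_kind hq hV, pow_natAbs_add_two_mul hq,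
          show r + 2 * i + (s + 2 * i) = r + s + 4 * i by ring,
          show s + 2 * i - (r + 2 * i) = s - r by ring]
    _ = _ := by
      rw [Finset.sum_sub_distrib, Finset.sum_const, Finset.card_range, nsmul_eq_mul]
      push_cast
      ring

end

theorem stmt_8_general (p q : ℤ) (hp : p ≠ 0) (hq : q = 1 ∨ q = -1)
    (U V : ℤ → ℤ)
    (hU0 : U 0 = 0) (hU1 : U 1 = 1)
    (hUrec : ∀ n : ℤ, U n = p * U (n - 1) - q * U (n - 2))
    (hV0 : V 0 = 2) (hV1 : V 1 = p)
    (hVrec : ∀ n : ℤ, V n = p * V (n - 1) - q * V (n - 2))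
    (a : ℤ → ℤ) (ha : ∀ n : ℤ, p * a n = U (2 * n))
    (r s : ℤ) (n : ℕ) :
    (∑ i ∈ Finset.range (n + 1), U (r + 2 * i) * V (s + 2 * i)) =
      a ((n : ℤ) + 1) * U (2 * n + r + s) - ((n : ℤ) + 1) * q ^ r.natAbs * U (s - r) := by
  have hq2 : q ^ 2 = 1 := by rcases hq with rfl | rfl <;> norm_num
  have hU : IsLucasFirstKind p q U := ⟨.of_forall_eq_sub hUrec, hU0, hU1⟩
  have hV : IsLucasSecondKind p q V := ⟨.of_forall_eq_sub hVrec, hV0, hV1⟩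
  refine mul_left_cancel₀ hp ?_
  rw [hU.sum_mul_second_kind hq2 hV, mul_sub, mul_sub, hU.mul_sum_range_add_four_mul hq2,
    ← mul_assoc p (a _), ha]
  ring_nf

theorem stmt_8 (p q : ℤ) (hp : p ≠ 0) (hq : q = 1 ∨ q = -1)
    (hΔ : p ^ 2 - 4 * q ≠ 0)
    (U V : ℤ → ℤ)
    (hU0 : U 0 = 0) (hU1 : U 1 = 1)
    (hUrec : ∀ n : ℤ, U n = p * U (n - 1) - q * U (n - 2))
    (hV0 : V 0 = 2) (hV1 : V 1 = p)
    (hVrec : ∀ n : ℤ, V n = p * V (n - 1) - q * V (n - 2))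
    (a : ℤ → ℤ) (ha : ∀ n : ℤ, p * a n = U (2 * n))
    (r s : ℤ) (n : ℕ) :
    (∑ i ∈ Finset.range (n + 1), U (r + 2 * i) * V (s + 2 * i)) =
      a ((n : ℤ) + 1) * U (2 * n + r + s) - ((n : ℤ) + 1) * q ^ r.natAbs * U (s - r) :=
  stmt_8_general p q hp hq U V hU0 hU1 hUrec hV0 hV1 hVrec a ha r s n
end

section
/- For all integers r, s and all natural numbers m, the following two identities hold: Σ_{i=0}^{2m} (−1)^i·V_{r+2i}·V_{s+2i} = d_m·V_{4m+r+s} + q^r·V_{s−r}, and Σ_{i=0}^{2m+1} (−1)^i·V_{r+2i}·V_{s+2i} = −p·Δ·c_m·U_{4m+r+s+2}. -/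
/-!
Everything rests on two product formulas,
`V a * V b = V (a + b) + q ^ |a| * V (b - a)` and `Δ * U a * U b = V (a + b) - q ^ |b| * V (a - b)`,
each proved by observing that both sides satisfy the recurrence in one of the variables and agree
at two consecutive indices; since `q = ±1`, the recurrence runs backwards as well, so this pins the
sequences down on all of `ℤ`.

The first formula turns the `i`-th summand into `V (r + s + 4 i) + q ^ |r| * V (s - r)`. The
alternating sum of the constant parts is `1` or `0`, and `V 2 * V t = V (t + 2) + V (t - 2)` makes
`V 2 * ∑ (-1) ^ i * V (t + 4 i)` telescope to `V (t - 2) ∓ V (t + 4 n - 2)`. The product formulas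
identify this with `V 2 * d m * V (4 m + t)`, resp. `-V 2 * p * Δ * c m * U (4 m + t + 2)` (using
`U 4 = p * V 2`), and `V 2 = p ^ 2 - 2 q ≠ 0` cancels.
-/

open Finset

variable {R : Type*} [CommRing R]

def IsLucasSequence (p q : R) (f : ℤ → R) : Prop :=
  ∀ n, f n = p * f (n - 1) - q * f (n - 2)

namespace IsLucasSequence

variable {p q : R} {f g : ℤ → R}

theorem add (hf : IsLucasSequence p q f) (hg : IsLucasSequence p q g) :
    IsLucasSequence p q (fun n => f n + g n) := fun n => by
  dsimp only; rw [hf n, hg n]; ring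

theorem sub (hf : IsLucasSequence p q f) (hg : IsLucasSequence p q g) :
    IsLucasSequence p q (fun n => f n - g n) := fun n => by
  dsimp only; rw [hf n, hg n]; ring

theorem const_mul (hf : IsLucasSequence p q f) (c : R) :
    IsLucasSequence p q (fun n => c * f n) := fun n => by
  dsimp only; rw [hf n]; ring

theorem comp_add (hf : IsLucasSequence p q f) (a : ℤ) :
    IsLucasSequence p q (fun n => f (n + a)) := fun n => by
  dsimp only; rw [hf (n + a), sub_add_eq_add_sub, sub_add_eq_add_sub]

theorem comp_sub (hf : IsLucasSequence p q f) (a : ℤ) :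
    IsLucasSequence p q (fun n => f (n - a)) := by
  simpa only [sub_eq_add_neg] using hf.comp_add (-a)

theorem eq_zero (hq : IsUnit q) (hf : IsLucasSequence p q f) (h0 : f 0 = 0) (h1 : f 1 = 0)
    (n : ℤ) : f n = 0 := by
  suffices ∀ n : ℤ, f n = 0 ∧ f (n + 1) = 0 from (this n).1
  intro n
  induction n using Int.induction_on with
  | zero => exact ⟨h0, by simpa using h1⟩
  | succ i ih =>
    refine ⟨ih.2, ?_⟩
    rw [hf, add_sub_cancel_right, show (i : ℤ) + 1 + 1 - 2 = i by ring, ih.1, ih.2]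
    ring
  | pred i ih =>
    refine ⟨?_, by simpa using ih.1⟩
    have h := hf (-i + 1)
    rw [add_sub_cancel_right, show -(i : ℤ) + 1 - 2 = -i - 1 by ring, ih.1, ih.2] at h
    exact hq.mul_right_eq_zero.1 (by linear_combination h)

theorem ext (hq : IsUnit q) (hf : IsLucasSequence p q f) (hg : IsLucasSequence p q g)
    (h0 : f 0 = g 0) (h1 : f 1 = g 1) : f = g :=
  funext fun n => sub_eq_zero.1 <|
    (hf.sub hg).eq_zero hq (sub_eq_zero.2 h0) (sub_eq_zero.2 h1) n

end IsLucasSequence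

section Lucas

variable {p q : R}

theorem pow_eq_pow_of_mod_two_eq (hq : q * q = 1) {a b : ℕ} (h : a % 2 = b % 2) :
    q ^ a = q ^ b := by
  have hmod : ∀ n : ℕ, q ^ n = q ^ (n % 2) := fun n => by
    conv_lhs => rw [← Nat.div_add_mod n 2, pow_add, pow_mul, sq, hq, one_pow, one_mul]
  rw [hmod a, hmod b, h]

theorem pow_natAbs_of_even (hq : q * q = 1) {a : ℤ} (ha : Even a) : q ^ a.natAbs = 1 := by
  rw [Int.even_iff] at ha
  rw [pow_eq_pow_of_mod_two_eq hq (b := 0) (by omega), pow_zero]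

variable {U V : ℤ → R}
  (hU : IsLucasSequence p q U) (hU0 : U 0 = 0) (hU1 : U 1 = 1)
  (hV : IsLucasSequence p q V) (hV0 : V 0 = 2) (hV1 : V 1 = p)

include hU hU0 hU1 in
theorem lucasU_four : U 4 = p * (p ^ 2 - 2 * q) := by
  have h2 := hU 2
  have h3 := hU 3
  have h4 := hU 4
  norm_num [hU0, hU1] at h2 h3 h4
  linear_combination h4 + p * h3 + (p ^ 2 - q) * h2

include hV hV0 hV1

theorem lucasV_two : V 2 = p ^ 2 - 2 * q := by
  have h := hV 2
  norm_num [hV0, hV1] at h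
  linear_combination h

-- Both sides satisfy the recurrence with parameters `(p * q, q)`.
theorem lucasV_neg (hq : q * q = 1) (a : ℤ) : V (-a) = q ^ a.natAbs * V a := by
  have hW : IsLucasSequence (p * q) q (fun n => V (-n)) := fun n => by
    have h := hV (-n + 2)
    rw [show -n + 2 = -(n - 2) by ring, show -(n - 2) - 1 = -(n - 1) by ring,
      show -(n - 2) - 2 = -n by ring] at h
    linear_combination q * h - V (-n) * hq
  have hG : IsLucasSequence (p * q) q (fun n => q ^ n.natAbs * V n) := fun n => by
    have h1 : q ^ n.natAbs = q * q ^ (n - 1).natAbs := by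
      rw [← pow_succ']; exact pow_eq_pow_of_mod_two_eq hq (by omega)
    have h2 : q ^ n.natAbs = q ^ (n - 2).natAbs := pow_eq_pow_of_mod_two_eq hq (by omega)
    linear_combination q ^ n.natAbs * hV n + p * V (n - 1) * h1 - q * V (n - 2) * h2
  have hVm1 : V (-1) = q * p := by
    have h := hV 1
    norm_num [hV0, hV1] at h
    linear_combination q * h - V (-1) * hq
  refine congrFun (hW.ext (.of_mul_eq_one q hq) hG ?_ ?_) a
  · simp
  · simpa [hV1] using hVm1

theorem lucasV_mul_lucasV_s10 (hq : q * q = 1) (a b : ℤ) :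
    V a * V b = V (a + b) + q ^ a.natAbs * V (b - a) := by
  have hsq : q ^ a.natAbs * q ^ a.natAbs = 1 := by rw [← mul_pow, hq, one_pow]
  have hodd : q ^ a.natAbs * q ^ (a - 1).natAbs = q := by
    rw [← pow_add, pow_eq_pow_of_mod_two_eq hq (b := 1) (by omega), pow_one]
  rw [add_comm a b]
  refine congrFun ((hV.const_mul (V a)).ext (.of_mul_eq_one q hq)
    ((hV.comp_add a).add ((hV.comp_sub a).const_mul _)) ?_ ?_) b
  · simp only [hV0, zero_add, zero_sub, lucasV_neg hV hV0 hV1 hq]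
    linear_combination -V a * hsq
  · rw [hV1, show 1 - a = -(a - 1) by ring, lucasV_neg hV hV0 hV1 hq, add_comm 1 a]
    have h := hV (a + 1)
    rw [add_sub_cancel_right, show a + 1 - 2 = a - 1 by ring] at h
    linear_combination -h - V (a - 1) * hodd

theorem lucasV_two_mul (hq : q * q = 1) (n : ℤ) : V 2 * V n = V (n + 2) + V (n - 2) := by
  rw [lucasV_mul_lucasV_s10 hV hV0 hV1 hq, add_comm 2 n]
  simp [sq, hq]

theorem lucasV_two_mul_sum_alternating (hq : q * q = 1) (t : ℤ) (n : ℕ) :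
    V 2 * ∑ i ∈ range n, (-1) ^ i * V (t + 4 * i) =
      V (t - 2) - (-1) ^ n * V (t + 4 * n - 2) := by
  have h := sum_range_sub' (fun i : ℕ => (-1 : R) ^ i * V (t + 4 * i - 2)) n
  simp only [Nat.cast_zero, mul_zero, add_zero, pow_zero, one_mul] at h
  rw [mul_sum, ← h]
  refine sum_congr rfl fun i _ => ?_
  rw [mul_left_comm, lucasV_two_mul hV hV0 hV1 hq, Nat.cast_succ,
    show t + 4 * (i + 1 : ℤ) - 2 = t + 4 * i + 2 by ring, pow_succ]
  ring

theorem sum_alternating_lucasV_mul_lucasV (hq : q * q = 1) (r s : ℤ) (n : ℕ) :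
    ∑ i ∈ range n, (-1) ^ i * (V (r + 2 * i) * V (s + 2 * i)) =
      ∑ i ∈ range n, (-1) ^ i * V (r + s + 4 * i) +
        (∑ i ∈ range n, (-1 : R) ^ i) * (q ^ r.natAbs * V (s - r)) := by
  rw [sum_mul, ← sum_add_distrib]
  refine sum_congr rfl fun i _ => ?_
  rw [lucasV_mul_lucasV_s10 hV hV0 hV1 hq, show r + 2 * i + (s + 2 * i) = r + s + 4 * i by ring,
    show s + 2 * i - (r + 2 * i) = s - r by ring,
    pow_eq_pow_of_mod_two_eq hq (a := (r + 2 * i).natAbs) (b := r.natAbs) (by omega)]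
  ring

include hU hU0 hU1

theorem discr_mul_lucasU (hq : q * q = 1) (n : ℤ) :
    (p ^ 2 - 4 * q) * U n = V (n + 1) - q * V (n - 1) := by
  refine congrFun ((hU.const_mul _).ext (.of_mul_eq_one q hq)
    ((hV.comp_add 1).sub ((hV.comp_sub 1).const_mul q)) ?_ ?_) n
  · simp only [hU0, mul_zero, zero_add, zero_sub, hV1, lucasV_neg hV hV0 hV1 hq 1,
      Int.natAbs_one, pow_one]
    linear_combination p * hq
  · simp only [hU1, mul_one, Int.reduceAdd, sub_self, lucasV_two hV hV0 hV1, hV0]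
    ring

theorem discr_mul_lucasU_mul_lucasU (hq : q * q = 1) (a b : ℤ) :
    (p ^ 2 - 4 * q) * (U a * U b) = V (a + b) - q ^ b.natAbs * V (a - b) := by
  rw [mul_comm (U a), ← mul_assoc]
  have hsq : q ^ b.natAbs * q ^ b.natAbs = 1 := by rw [← mul_pow, hq, one_pow]
  have hodd : q ^ b.natAbs * q ^ (b - 1).natAbs = q := by
    rw [← pow_add, pow_eq_pow_of_mod_two_eq hq (b := 1) (by omega), pow_one]
  refine congrFun ((hU.const_mul _).ext (.of_mul_eq_one q hq)
    ((hV.comp_add b).sub ((hV.comp_sub b).const_mul _)) ?_ ?_) a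
  · simp only [hU0, zero_add, zero_sub, lucasV_neg hV hV0 hV1 hq]
    linear_combination V b * hsq
  · rw [hU1, show 1 - b = -(b - 1) by ring, lucasV_neg hV hV0 hV1 hq, add_comm 1 b]
    linear_combination discr_mul_lucasU hU hU0 hU1 hV hV0 hV1 hq b + V (b - 1) * hodd

end Lucas

theorem sq_sub_two_mul_ne_zero {p q : ℤ} (hq : q = 1 ∨ q = -1) : p ^ 2 - 2 * q ≠ 0 := by
  rcases hq with rfl | rfl <;> intro h
  · exact Int.sq_ne_two_mod_four p (by rw [show p * p = 2 by linear_combination h]; rfl)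
  · nlinarith [sq_nonneg p]

theorem stmt_10_general (p q : ℤ) (hq : q = 1 ∨ q = -1)
    (U V : ℤ → ℤ)
    (hU0 : U 0 = 0) (hU1 : U 1 = 1)
    (hUrec : ∀ n : ℤ, U n = p * U (n - 1) - q * U (n - 2))
    (hV0 : V 0 = 2) (hV1 : V 1 = p)
    (hVrec : ∀ n : ℤ, V n = p * V (n - 1) - q * V (n - 2))
    (c d : ℤ → ℤ) (hc : ∀ n : ℤ, U 4 * c n = U (4 * n + 4)) (hd : ∀ n : ℤ, V 2 * d n = V (4 * n + 2))
    (r s : ℤ) (m : ℕ) :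
    (∑ i ∈ Finset.range (2 * m + 1), (-1 : ℤ) ^ i * (V (r + 2 * i) * V (s + 2 * i))) =
        d m * V (4 * m + r + s) + q ^ r.natAbs * V (s - r) ∧
      (∑ i ∈ Finset.range (2 * m + 2), (-1 : ℤ) ^ i * (V (r + 2 * i) * V (s + 2 * i))) =
        -(p * (p ^ 2 - 4 * q) * c m * U (4 * m + r + s + 2)) := by
  have hq2 : q * q = 1 := by rcases hq with rfl | rfl <;> norm_num
  have hV2 : V 2 ≠ 0 := lucasV_two hVrec hV0 hV1 ▸ sq_sub_two_mul_ne_zero hq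
  have hU4 : U 4 = p * V 2 := by rw [lucasU_four hUrec hU0 hU1, lucasV_two hVrec hV0 hV1]
  have htel := lucasV_two_mul_sum_alternating hVrec hV0 hV1 hq2 (r + s)
  simp only [sum_alternating_lucasV_mul_lucasV hVrec hV0 hV1 hq2 r s, neg_one_geom_sum]
  constructor
  · apply mul_left_cancel₀ hV2
    have hprod := lucasV_mul_lucasV_s10 hVrec hV0 hV1 hq2 (4 * m + 2) (4 * m + r + s)
    rw [pow_natAbs_of_even hq2 ⟨2 * m + 1, by ring⟩, one_mul,
      show 4 * m + 2 + (4 * m + r + s) = r + s + 4 * ((2 * m + 1 : ℕ) : ℤ) - 2 by push_cast; ring,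
      show 4 * m + r + s - (4 * m + 2) = r + s - 2 by ring] at hprod
    rw [if_neg (by simp), mul_add, htel, (odd_two_mul_add_one m).neg_one_pow]
    linear_combination -hprod - V (4 * m + r + s) * hd m
  · apply mul_left_cancel₀ hV2
    have hprod :=
      discr_mul_lucasU_mul_lucasU hUrec hU0 hU1 hVrec hV0 hV1 hq2 (4 * m + r + s + 2) (4 * m + 4)
    rw [pow_natAbs_of_even hq2 ⟨2 * m + 2, by ring⟩, one_mul,
      show 4 * m + r + s + 2 + (4 * m + 4) = r + s + 4 * ((2 * m + 2 : ℕ) : ℤ) - 2 by push_cast; ring,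
      show 4 * m + r + s + 2 - (4 * m + 4) = r + s - 2 by ring] at hprod
    rw [if_pos ⟨m + 1, by ring⟩, zero_mul, add_zero, htel, Even.neg_one_pow ⟨m + 1, by ring⟩]
    linear_combination hprod + (p ^ 2 - 4 * q) * U (4 * m + r + s + 2) * (hc m - c m * hU4)

theorem stmt_10 (p q : ℤ) (hp : p ≠ 0) (hq : q = 1 ∨ q = -1)
    (hΔ : p ^ 2 - 4 * q ≠ 0)
    (U V : ℤ → ℤ)
    (hU0 : U 0 = 0) (hU1 : U 1 = 1)
    (hUrec : ∀ n : ℤ, U n = p * U (n - 1) - q * U (n - 2))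
    (hV0 : V 0 = 2) (hV1 : V 1 = p)
    (hVrec : ∀ n : ℤ, V n = p * V (n - 1) - q * V (n - 2))
    (c d : ℤ → ℤ) (hc : ∀ n : ℤ, U 4 * c n = U (4 * n + 4)) (hd : ∀ n : ℤ, V 2 * d n = V (4 * n + 2))
    (r s : ℤ) (m : ℕ) :
    (∑ i ∈ Finset.range (2 * m + 1), (-1 : ℤ) ^ i * (V (r + 2 * i) * V (s + 2 * i))) =
        d m * V (4 * m + r + s) + q ^ r.natAbs * V (s - r) ∧
      (∑ i ∈ Finset.range (2 * m + 2), (-1 : ℤ) ^ i * (V (r + 2 * i) * V (s + 2 * i))) =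
        -(p * (p ^ 2 - 4 * q) * c m * U (4 * m + r + s + 2)) :=
  stmt_10_general p q hq U V hU0 hU1 hUrec hV0 hV1 hVrec c d hc hd r s m
end

section
/- For all integers r, s, t and all natural numbers n, the following identity holds: Σ_{i=0}^{n} V_{s+2i}·V_{s+t+2i} + Δ·q^{s−r}·(Σ_{i=0}^{n} U_{r+2i}·U_{r+t+2i}) = a_{n+1}·V_{s−r}·V_{2n+r+s+t}. -/
/-!
Over any commutative ring, with `q` a unit, the two-sided solutions of
`x n = p * x (n - 1) - q * x (n - 2)` form a module in which a solution is determined by its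
values at `0` and `1`, and which is stable under shifts and under the twisted reflection
`n ↦ q ^ n * x (a - n)`. Each product formula
`V a * V b = V (a + b) + q ^ b * V (a - b)`, `Δ * U a * U b = V (a + b) - q ^ b * V (a - b)`,
`U a * V b = U (a + b) - q ^ a * U (b - a)` is therefore checked at two initial values.
The first two turn each summand into `V (2s + t + 4i) + q ^ (s - r) * V (2r + t + 4i)`.
When `q ^ 2 = 1`, the third gives `p * V c = U (c + 2) - U (c - 2)`, so `p * ∑ V (m + 4i)`
telescopes to `U (2n + 2) * V (m + 2n)`, and the first recombines the two resulting terms.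
For `q = ±1`, `q ^ |k|` is the unit power `q ^ k`.
-/

open Finset

namespace Lucas

variable {R : Type*} [CommRing R] (p : R) (q : Rˣ)

def solutions : Submodule R (ℤ → R) where
  carrier := {f | ∀ n, f n = p * f (n - 1) - q * f (n - 2)}
  add_mem' {f g} hf hg n := by simp only [Pi.add_apply, hf n, hg n]; ring
  zero_mem' n := by simp
  smul_mem' c f hf n := by simp only [Pi.smul_apply, smul_eq_mul, hf n]; ring

variable {p q}

theorem shift_mem_solutions {f : ℤ → R} (hf : f ∈ solutions p q) (k : ℤ) :
    (fun n ↦ f (n + k)) ∈ solutions p q := fun n ↦ by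
  simpa only [sub_add_eq_add_sub] using hf (n + k)

theorem twistedReflect_mem_solutions {f : ℤ → R} (hf : f ∈ solutions p q) (a : ℤ) :
    (fun n ↦ ((q ^ n : Rˣ) : R) * f (a - n)) ∈ solutions p q := fun n ↦ by
  have h := hf (a - (n - 2))
  have hn1 : ((q ^ (n - 1) : Rˣ) : R) = q * ((q ^ (n - 2) : Rˣ) : R) := by
    rw [← Units.val_mul, ← zpow_one_add]; ring_nf
  have hn : ((q ^ n : Rˣ) : R) = q * q * ((q ^ (n - 2) : Rˣ) : R) := by
    rw [mul_assoc, ← hn1, ← Units.val_mul, ← zpow_one_add]; ring_nf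
  rw [show a - (n - 2) - 1 = a - (n - 1) by ring, show a - (n - 2) - 2 = a - n by ring] at h
  simp only [hn, hn1, h]
  ring

theorem eq_zero_of_mem_solutions {f : ℤ → R} (hf : f ∈ solutions p q) (h0 : f 0 = 0)
    (h1 : f 1 = 0) : f = 0 := by
  have hstep : ∀ n : ℤ, f n = 0 ∧ f (n + 1) = 0 := by
    intro n
    induction n using Int.induction_on with
    | zero => simpa using ⟨h0, h1⟩
    | succ k ih =>
      refine ⟨ih.2, ?_⟩
      rw [hf, add_sub_cancel_right, show (k : ℤ) + 1 + 1 - 2 = k by ring, ih.1, ih.2]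
      ring
    | pred k ih =>
      refine ⟨?_, by simpa using ih.1⟩
      have h := hf (-(k : ℤ) + 1)
      rw [ih.2, add_sub_cancel_right, ih.1, show -(k : ℤ) + 1 - 2 = -k - 1 by ring] at h
      exact (Units.mul_right_eq_zero q).mp (by linear_combination h)
  exact funext fun n ↦ (hstep n).1

theorem eq_of_mem_solutions {f g : ℤ → R} (hf : f ∈ solutions p q) (hg : g ∈ solutions p q)
    (h0 : f 0 = g 0) (h1 : f 1 = g 1) : f = g :=
  sub_eq_zero.mp <| eq_zero_of_mem_solutions (sub_mem hf hg) (sub_eq_zero.mpr h0)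
    (sub_eq_zero.mpr h1)

theorem apply_add_one_of_mem_solutions {f : ℤ → R} (hf : f ∈ solutions p q) (n : ℤ) :
    f (n + 1) = p * f n - q * f (n - 1) := by
  rw [hf, add_sub_cancel_right, show n + 1 - 2 = n - 1 by ring]

variable (p q) in
structure IsLucasU (U : ℤ → R) : Prop where
  mem : U ∈ solutions p q
  zero : U 0 = 0
  one : U 1 = 1

variable (p q) in
structure IsLucasV (V : ℤ → R) : Prop where
  mem : V ∈ solutions p q
  zero : V 0 = 2
  one : V 1 = p

variable {U V : ℤ → R}

theorem IsLucasU.units_mul_neg_one (hU : IsLucasU p q U) : q * U (-1) = -1 := by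
  have h := apply_add_one_of_mem_solutions hU.mem 0
  rw [zero_add, hU.one, hU.zero, zero_sub] at h
  linear_combination h

theorem IsLucasU.two (hU : IsLucasU p q U) : U 2 = p := by
  have h := apply_add_one_of_mem_solutions hU.mem 1
  rw [one_add_one_eq_two, hU.one, sub_self, hU.zero] at h
  linear_combination h

theorem IsLucasV.units_mul_neg_one (hV : IsLucasV p q V) : q * V (-1) = p := by
  have h := apply_add_one_of_mem_solutions hV.mem 0
  rw [zero_add, hV.one, hV.zero, zero_sub] at h
  linear_combination h

theorem IsLucasV.two (hV : IsLucasV p q V) : V 2 = p ^ 2 - 2 * q := by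
  have h := apply_add_one_of_mem_solutions hV.mem 1
  rw [one_add_one_eq_two, hV.one, sub_self, hV.zero] at h
  linear_combination h

theorem IsLucasV.apply_eq_sub (hU : IsLucasU p q U) (hV : IsLucasV p q V) (n : ℤ) :
    V n = U (n + 1) - q * U (n - 1) := by
  have key : V = fun n ↦ U (n + 1) - q * U (n + -1) :=
    eq_of_mem_solutions hV.mem
      (sub_mem (shift_mem_solutions hU.mem 1)
        (Submodule.smul_mem _ _ (shift_mem_solutions hU.mem (-1))))
      (by simp only [zero_add, hV.zero, hU.one, hU.units_mul_neg_one]; ring)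
      (by norm_num [hV.one, hU.zero, hU.two])
  simpa only [← sub_eq_add_neg] using congrFun key n

theorem IsLucasU.discr_mul_apply (hU : IsLucasU p q U) (hV : IsLucasV p q V) (n : ℤ) :
    (p ^ 2 - 4 * q) * U n = V (n + 1) - q * V (n - 1) := by
  have key : (fun n ↦ (p ^ 2 - 4 * q) * U n) = fun n ↦ V (n + 1) - q * V (n + -1) :=
    eq_of_mem_solutions (Submodule.smul_mem _ _ hU.mem)
      (sub_mem (shift_mem_solutions hV.mem 1)
        (Submodule.smul_mem _ _ (shift_mem_solutions hV.mem (-1))))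
      (by simp only [zero_add, hU.zero, hV.one, hV.units_mul_neg_one]; ring)
      (by norm_num [hV.zero, hU.one, hV.two]; ring)
  simpa only [← sub_eq_add_neg] using congrFun key n

theorem IsLucasV.apply_mul_apply (hV : IsLucasV p q V) (a b : ℤ) :
    V a * V b = V (a + b) + (q ^ b : Rˣ) * V (a - b) := by
  have key : (fun n ↦ V a * V n) = fun n ↦ V (n + a) + (q ^ n : Rˣ) * V (a - n) :=
    eq_of_mem_solutions (Submodule.smul_mem _ (V a) hV.mem)
      (add_mem (shift_mem_solutions hV.mem a) (twistedReflect_mem_solutions hV.mem a))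
      (by simp only [hV.zero, zero_add, zpow_zero, Units.val_one, one_mul, sub_zero]; ring)
      (by rw [hV.one, zpow_one, add_comm 1 a, apply_add_one_of_mem_solutions hV.mem]; ring)
  rw [add_comm a]
  exact congrFun key b

theorem IsLucasU.discr_mul_apply_mul_apply (hU : IsLucasU p q U) (hV : IsLucasV p q V)
    (a b : ℤ) :
    (p ^ 2 - 4 * q) * (U a * U b) = V (a + b) - (q ^ b : Rˣ) * V (a - b) := by
  have key : (fun n ↦ (p ^ 2 - 4 * q) * U a * U n) =
      fun n ↦ V (n + a) - (q ^ n : Rˣ) * V (a - n) :=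
    eq_of_mem_solutions (Submodule.smul_mem _ _ hU.mem)
      (sub_mem (shift_mem_solutions hV.mem a) (twistedReflect_mem_solutions hV.mem a))
      (by simp only [hU.zero, zero_add, zpow_zero, Units.val_one, one_mul, sub_zero]; ring)
      (by rw [hU.one, zpow_one, add_comm 1 a, hU.discr_mul_apply hV]; ring)
  rw [← mul_assoc, add_comm a]
  exact congrFun key b

theorem IsLucasU.apply_mul_apply_isLucasV (hU : IsLucasU p q U) (hV : IsLucasV p q V)
    (a b : ℤ) :
    U a * V b = U (a + b) - (q ^ a : Rˣ) * U (b - a) := by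
  have key : (fun n ↦ V b * U n) = fun n ↦ U (n + b) - (q ^ n : Rˣ) * U (b - n) :=
    eq_of_mem_solutions (Submodule.smul_mem _ (V b) hU.mem)
      (sub_mem (shift_mem_solutions hU.mem b) (twistedReflect_mem_solutions hU.mem b))
      (by simp only [hU.zero, zero_add, zpow_zero, Units.val_one, one_mul, sub_zero]; ring)
      (by rw [hU.one, zpow_one, add_comm 1 b, hV.apply_eq_sub hU]; ring)
  rw [mul_comm]
  exact congrFun key a

theorem IsLucasU.mul_sum_apply_add_four_mul (hU : IsLucasU p q U) (hV : IsLucasV p q V)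
    (m : ℤ) (n : ℕ) :
    p * ∑ i ∈ range (n + 1), (q : R) ^ (2 * (n - i)) * V (m + 4 * i) =
      U (2 * (n + 1)) * V (m + 2 * n) := by
  induction n with
  | zero => simp [hU.two]
  | succ n ih =>
    have hweights : ∑ i ∈ range (n + 1), (q : R) ^ (2 * (n + 1 - i)) * V (m + 4 * i) =
        (q : R) ^ 2 * ∑ i ∈ range (n + 1), (q : R) ^ (2 * (n - i)) * V (m + 4 * i) := by
      rw [mul_sum]
      refine sum_congr rfl fun i hi ↦ ?_
      rw [Nat.sub_add_comm (mem_range_succ_iff.mp hi)]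
      ring
    have h1 := hU.apply_mul_apply_isLucasV hV (2 * (n + 1) : ℕ) (m + 2 * n)
    have h2 := hU.apply_mul_apply_isLucasV hV (2 * (n + 1 + 1) : ℕ) (m + 2 * (n + 1 : ℕ))
    have h3 := hU.apply_mul_apply_isLucasV hV (2 : ℕ) (m + 4 * (n + 1 : ℕ))
    simp only [zpow_natCast, Units.val_pow_eq_pow_val] at h1 h2 h3
    rw [sum_range_succ, hweights, Nat.sub_self, mul_zero, pow_zero, one_mul, mul_add, ← mul_assoc,
      mul_comm p, mul_assoc, ih, ← hU.two]
    push_cast at h1 h2 h3 ⊢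
    linear_combination (norm := ring_nf) h3 - h2 + (q : R) ^ 2 * h1

theorem IsLucasV.apply_mul_apply_add_discr_mul (hU : IsLucasU p q U) (hV : IsLucasV p q V)
    (x y t : ℤ) :
    V x * V (x + t) + (p ^ 2 - 4 * q) * (q ^ (x - y) : Rˣ) * (U y * U (y + t)) =
      V (2 * x + t) + (q ^ (x - y) : Rˣ) * V (2 * y + t) := by
  have hVV := hV.apply_mul_apply (x + t) x
  have hUU := hU.discr_mul_apply_mul_apply hV (y + t) y
  have hpow : ((q ^ (x - y) : Rˣ) : R) * (q ^ y : Rˣ) = (q ^ x : Rˣ) := by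
    rw [← Units.val_mul, ← zpow_add, sub_add_cancel]
  rw [add_sub_cancel_left, show x + t + x = 2 * x + t by ring] at hVV
  rw [add_sub_cancel_left, show y + t + y = 2 * y + t by ring] at hUU
  linear_combination hVV + ((q ^ (x - y) : Rˣ) : R) * hUU - V t * hpow

theorem mul_sum_V_mul_V_add_sum_U_mul_U (hU : IsLucasU p q U) (hV : IsLucasV p q V)
    (hq : (q : R) ^ 2 = 1) (r s t : ℤ) (n : ℕ) :
    p * ((∑ i ∈ range (n + 1), V (s + 2 * i) * V (s + t + 2 * i)) +
        (p ^ 2 - 4 * q) * (q ^ (s - r) : Rˣ) *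
          ∑ i ∈ range (n + 1), U (r + 2 * i) * U (r + t + 2 * i)) =
      U (2 * (n + 1)) * V (s - r) * V (2 * n + r + s + t) := by
  have hsum (m : ℤ) :
      p * ∑ i ∈ range (n + 1), V (m + 4 * i) = U (2 * (n + 1)) * V (m + 2 * n) := by
    simpa only [pow_mul, hq, one_pow, one_mul] using hU.mul_sum_apply_add_four_mul hV m n
  have hterms : (∑ i ∈ range (n + 1), V (s + 2 * i) * V (s + t + 2 * i)) +
      (p ^ 2 - 4 * q) * (q ^ (s - r) : Rˣ) *
        ∑ i ∈ range (n + 1), U (r + 2 * i) * U (r + t + 2 * i) =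
      (∑ i ∈ range (n + 1), V (2 * s + t + 4 * i)) +
        (q ^ (s - r) : Rˣ) * ∑ i ∈ range (n + 1), V (2 * r + t + 4 * i) := by
    simp only [mul_sum, ← sum_add_distrib]
    refine sum_congr rfl fun i _ ↦ ?_
    have h := hV.apply_mul_apply_add_discr_mul hU (s + 2 * i) (r + 2 * i) t
    rw [add_sub_add_right_eq_sub] at h
    linear_combination (norm := ring_nf) h
  have hVV := hV.apply_mul_apply (2 * n + r + s + t) (s - r)
  rw [hterms, mul_add, hsum, mul_left_comm, hsum]
  linear_combination (norm := ring_nf) -U (2 * (n + 1)) * hVV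

end Lucas

theorem Int.units_pow_natAbs (u : ℤˣ) (k : ℤ) : u ^ k.natAbs = u ^ k := by
  obtain ⟨m, rfl | rfl⟩ := Int.eq_nat_or_neg k <;> simp [Int.units_inv_eq_self]

theorem stmt_13_general (p q : ℤ) (hp : p ≠ 0) (hq : q = 1 ∨ q = -1)
    (U V : ℤ → ℤ)
    (hU0 : U 0 = 0) (hU1 : U 1 = 1)
    (hUrec : ∀ n : ℤ, U n = p * U (n - 1) - q * U (n - 2))
    (hV0 : V 0 = 2) (hV1 : V 1 = p)
    (hVrec : ∀ n : ℤ, V n = p * V (n - 1) - q * V (n - 2))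
    (a : ℤ → ℤ) (ha : ∀ n : ℤ, p * a n = U (2 * n))
    (r s t : ℤ) (n : ℕ) :
    (∑ i ∈ Finset.range (n + 1), V (s + 2 * i) * V (s + t + 2 * i)) +
        (p ^ 2 - 4 * q) * q ^ (s - r).natAbs * (∑ i ∈ Finset.range (n + 1), U (r + 2 * i) * U (r + t + 2 * i)) =
      a ((n : ℤ) + 1) * V (s - r) * V (2 * n + r + s + t) := by
  obtain ⟨u, rfl⟩ := Int.isUnit_iff.mpr hq
  have hU : Lucas.IsLucasU p u U := ⟨hUrec, hU0, hU1⟩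
  have hV : Lucas.IsLucasV p u V := ⟨hVrec, hV0, hV1⟩
  have hu : (u : ℤ) ^ 2 = 1 := by rw [← Units.val_pow_eq_pow_val, Int.units_sq, Units.val_one]
  apply mul_left_cancel₀ hp
  rw [← Units.val_pow_eq_pow_val, Int.units_pow_natAbs,
    Lucas.mul_sum_V_mul_V_add_sum_U_mul_U hU hV hu, ← ha]
  ring

theorem stmt_13 (p q : ℤ) (hp : p ≠ 0) (hq : q = 1 ∨ q = -1)
    (hΔ : p ^ 2 - 4 * q ≠ 0)
    (U V : ℤ → ℤ)
    (hU0 : U 0 = 0) (hU1 : U 1 = 1)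
    (hUrec : ∀ n : ℤ, U n = p * U (n - 1) - q * U (n - 2))
    (hV0 : V 0 = 2) (hV1 : V 1 = p)
    (hVrec : ∀ n : ℤ, V n = p * V (n - 1) - q * V (n - 2))
    (a : ℤ → ℤ) (ha : ∀ n : ℤ, p * a n = U (2 * n))
    (r s t : ℤ) (n : ℕ) :
    (∑ i ∈ Finset.range (n + 1), V (s + 2 * i) * V (s + t + 2 * i)) +
        (p ^ 2 - 4 * q) * q ^ (s - r).natAbs * (∑ i ∈ Finset.range (n + 1), U (r + 2 * i) * U (r + t + 2 * i)) =
      a ((n : ℤ) + 1) * V (s - r) * V (2 * n + r + s + t) :=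
  stmt_13_general p q hp hq U V hU0 hU1 hUrec hV0 hV1 hVrec a ha r s t n
end

section
/- For every integer k and every natural number m, the following two identities hold: −2·q·(1 + d_m) + Σ_{i=0}^{2m} (−1)^i·V_{2k−1+2i}² = Δ·d_m·U_{2k+2m−1}², and −p²·q·Δ·c_m + Σ_{i=0}^{2m+1} (−1)^i·V_{2k−1+2i}² = −p·Δ·c_m·U_{2k+2m+1}·V_{2k+2m−1}. -/
/-!
With `Δ = p ^ 2 - 4 * q`, odd-index squares are `V (2j+1) ^ 2 = V (4j+2) + 2q` and
`V 2 * V n = V (n + 2) + V (n - 2)`, so `V 2` times the alternating sum of squares telescopes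
to `V (4k-4) ∓ V (4k+4N-4)` plus constants. The product formulas `V (x+y) + V (x-y) = V x * V y`
and `V (x+y) - V (x-y) = Δ * U x * U y` (for even `y`) turn these boundary terms into
`V (4m+2) * V (4k+4m-2)` for `N = 2m+1` and `-Δ * U (4m+4) * U (4k+4m)` for `N = 2m+2`;
dividing by `V 2 = p ^ 2 - 2q ≠ 0` gives the two identities.
-/

theorem eq_zero_of_linear_rec {p q : ℤ} {W : ℤ → ℤ} (hq : q ≠ 0)
    (hW : ∀ n, W (n + 2) = p * W (n + 1) - q * W n) (h0 : W 0 = 0) (h1 : W 1 = 0) (n : ℤ) :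
    W n = 0 := by
  suffices ∀ n, W n = 0 ∧ W (n + 1) = 0 from (this n).1
  intro n
  induction n using Int.induction_on with
  | zero => exact ⟨h0, h1⟩
  | succ i ih => exact ⟨ih.2, by rw [add_assoc, one_add_one_eq_two, hW, ih.1, ih.2]; ring⟩
  | pred i ih =>
    refine ⟨?_, by rw [sub_add_cancel]; exact ih.1⟩
    have h := hW (-i - 1)
    rw [show -(i : ℤ) - 1 + 2 = -i + 1 by ring, sub_add_cancel, ih.1, ih.2] at h
    simpa [hq] using h

theorem Finset.sum_range_neg_one_pow_mul_add {R : Type*} [CommRing R] (f : ℕ → R) (n : ℕ) :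
    ∑ i ∈ range n, (-1) ^ i * (f i + f (i + 1)) = f 0 - (-1) ^ n * f n := by
  induction n with
  | zero => simp
  | succ n ih => rw [sum_range_succ, ih]; ring

structure IsLucasPair (p q : ℤ) (U V : ℤ → ℤ) : Prop where
  fib_zero : U 0 = 0
  fib_one : U 1 = 1
  fib_rec : ∀ n, U n = p * U (n - 1) - q * U (n - 2)
  lucas_zero : V 0 = 2
  lucas_one : V 1 = p
  lucas_rec : ∀ n, V n = p * V (n - 1) - q * V (n - 2)

/-- Equal to `q ^ n` for `n ≥ 0`; it stands in for `q ^ n` at negative `n` as well. -/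
def cassini (p q : ℤ) (U : ℤ → ℤ) (n : ℤ) : ℤ :=
  U (n + 1) ^ 2 - p * U (n + 1) * U n + q * U n ^ 2

namespace IsLucasPair

variable {p q : ℤ} {U V : ℤ → ℤ}

theorem fib_add_two (h : IsLucasPair p q U V) (n : ℤ) : U (n + 2) = p * U (n + 1) - q * U n := by
  simpa [add_sub_assoc] using h.fib_rec (n + 2)

theorem lucas_add_two (h : IsLucasPair p q U V) (n : ℤ) :
    V (n + 2) = p * V (n + 1) - q * V n := by
  simpa [add_sub_assoc] using h.lucas_rec (n + 2)

/-- The recurrence at `n = 1` reads `1 = q * -U (-1)`. -/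
theorem q_isUnit (h : IsLucasPair p q U V) : IsUnit q := by
  have h1 := h.fib_rec 1
  norm_num [h.fib_zero, h.fib_one] at h1
  exact .of_mul_eq_one (-U (-1)) (by linarith)

theorem q_ne_zero (h : IsLucasPair p q U V) : q ≠ 0 := h.q_isUnit.ne_zero

theorem q_sq (h : IsLucasPair p q U V) : q ^ 2 = 1 := Int.isUnit_sq h.q_isUnit

theorem fib_two (h : IsLucasPair p q U V) : U 2 = p := by
  simpa [h.fib_zero, h.fib_one] using h.fib_add_two 0

theorem lucas_eq (h : IsLucasPair p q U V) (n : ℤ) : V n = 2 * U (n + 1) - p * U n := by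
  refine sub_eq_zero.mp (eq_zero_of_linear_rec (p := p)
    (W := fun n => V n - (2 * U (n + 1) - p * U n)) h.q_ne_zero (fun n => ?_) ?_ ?_ n)
  · linear_combination (norm := ring_nf) h.lucas_add_two n - 2 * h.fib_add_two (n + 1) +
      p * h.fib_add_two n
  · simp [h.lucas_zero, h.fib_one, h.fib_zero]
  · norm_num [h.lucas_one, h.fib_two, h.fib_one]; ring

theorem disc_mul_fib (h : IsLucasPair p q U V) (n : ℤ) :
    (p ^ 2 - 4 * q) * U n = 2 * V (n + 1) - p * V n := by
  linear_combination (norm := ring_nf) -2 * h.lucas_eq (n + 1) + p * h.lucas_eq n -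
    4 * h.fib_add_two n

theorem two_mul_fib_add (h : IsLucasPair p q U V) (x y : ℤ) :
    2 * U (x + y) = U x * V y + U y * V x := by
  refine sub_eq_zero.mp (eq_zero_of_linear_rec (p := p)
    (W := fun x => 2 * U (x + y) - (U x * V y + U y * V x)) h.q_ne_zero (fun x => ?_) ?_ ?_ x)
  · linear_combination (norm := ring_nf) 2 * h.fib_add_two (x + y) - V y * h.fib_add_two x -
      U y * h.lucas_add_two x
  · simp [h.fib_zero, h.lucas_zero]; ring
  · linear_combination (norm := ring_nf) -h.lucas_eq y - U y * h.lucas_one - V y * h.fib_one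

theorem two_mul_lucas_add (h : IsLucasPair p q U V) (x y : ℤ) :
    2 * V (x + y) = V x * V y + (p ^ 2 - 4 * q) * (U x * U y) := by
  refine sub_eq_zero.mp (eq_zero_of_linear_rec (p := p)
    (W := fun x => 2 * V (x + y) - (V x * V y + (p ^ 2 - 4 * q) * (U x * U y))) h.q_ne_zero
    (fun x => ?_) ?_ ?_ x)
  · linear_combination (norm := ring_nf) 2 * h.lucas_add_two (x + y) - V y * h.lucas_add_two x -
      (p ^ 2 - 4 * q) * U y * h.fib_add_two x
  · simp [h.fib_zero, h.lucas_zero]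
  · linear_combination (norm := ring_nf) -h.disc_mul_fib y - V y * h.lucas_one -
      (p ^ 2 - 4 * q) * U y * h.fib_one

theorem cassini_succ (h : IsLucasPair p q U V) (n : ℤ) :
    cassini p q U (n + 1) = q * cassini p q U n := by
  unfold cassini
  rw [add_assoc, one_add_one_eq_two, h.fib_add_two]
  ring

theorem cassini_add_two (h : IsLucasPair p q U V) (n : ℤ) :
    cassini p q U (n + 2) = cassini p q U n := by
  rw [← one_add_one_eq_two, ← add_assoc, h.cassini_succ, h.cassini_succ, ← mul_assoc, ← sq,
    h.q_sq, one_mul]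

theorem cassini_of_even (h : IsLucasPair p q U V) {n : ℤ} (hn : Even n) :
    cassini p q U n = 1 := by
  obtain ⟨t, rfl⟩ := hn
  induction t using Int.induction_on with
  | zero => simp [cassini, h.fib_zero, h.fib_one]
  | succ i ih => rw [show (i : ℤ) + 1 + (i + 1) = i + i + 2 by ring, h.cassini_add_two, ih]
  | pred i ih => rwa [show -(i : ℤ) + -i = -i - 1 + (-i - 1) + 2 by ring, h.cassini_add_two] at ih

theorem cassini_of_odd (h : IsLucasPair p q U V) {n : ℤ} (hn : Odd n) : cassini p q U n = q := by
  obtain ⟨t, rfl⟩ := hn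
  rw [h.cassini_succ, h.cassini_of_even (even_two_mul t), mul_one]

theorem lucas_sq_sub (h : IsLucasPair p q U V) (n : ℤ) :
    V n ^ 2 - (p ^ 2 - 4 * q) * U n ^ 2 = 4 * cassini p q U n := by
  rw [h.lucas_eq n, cassini]
  ring

-- The three product formulas solve the addition formulas at `(x - y, y)` for the values at
-- `x - y`; the determinant is `V y ^ 2 - Δ * U y ^ 2 = 4 * cassini p q U y`.
theorem lucas_mul_lucas (h : IsLucasPair p q U V) (x y : ℤ) :
    V x * V y = V (x + y) + cassini p q U y * V (x - y) := by
  have e1 := h.two_mul_fib_add (x - y) y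
  have e2 := h.two_mul_lucas_add (x - y) y
  rw [sub_add_cancel] at e1 e2
  refine mul_left_cancel₀ (four_ne_zero (α := ℤ)) ?_
  linear_combination -2 * h.two_mul_lucas_add x y + V y * e2 - (p ^ 2 - 4 * q) * U y * e1 +
    V (x - y) * h.lucas_sq_sub y

theorem disc_mul_fib_mul_fib (h : IsLucasPair p q U V) (x y : ℤ) :
    (p ^ 2 - 4 * q) * (U x * U y) = V (x + y) - cassini p q U y * V (x - y) := by
  have e1 := h.two_mul_fib_add (x - y) y
  have e2 := h.two_mul_lucas_add (x - y) y
  rw [sub_add_cancel] at e1 e2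
  refine mul_left_cancel₀ (four_ne_zero (α := ℤ)) ?_
  linear_combination -2 * h.two_mul_lucas_add x y - V y * e2 + (p ^ 2 - 4 * q) * U y * e1 -
    V (x - y) * h.lucas_sq_sub y

theorem fib_mul_lucas (h : IsLucasPair p q U V) (x y : ℤ) :
    U x * V y = U (x + y) + cassini p q U y * U (x - y) := by
  have e1 := h.two_mul_fib_add (x - y) y
  have e2 := h.two_mul_lucas_add (x - y) y
  rw [sub_add_cancel] at e1 e2
  refine mul_left_cancel₀ (four_ne_zero (α := ℤ)) ?_
  linear_combination -2 * h.two_mul_fib_add x y + V y * e1 - U y * e2 +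
    U (x - y) * h.lucas_sq_sub y

theorem lucas_two (h : IsLucasPair p q U V) : V 2 = p ^ 2 - 2 * q := by
  linear_combination (norm := ring_nf) h.lucas_add_two 0 + p * h.lucas_one - q * h.lucas_zero

theorem fib_four (h : IsLucasPair p q U V) : U 4 = p * V 2 := by
  have h3 := h.fib_add_two 1
  have h4 := h.fib_add_two 2
  norm_num [h.fib_one, h.fib_two] at h3 h4
  rw [h4, h3, h.lucas_two]
  ring

theorem lucas_two_ne_zero (h : IsLucasPair p q U V) : V 2 ≠ 0 := by
  rw [h.lucas_two]
  rcases Int.isUnit_iff.mp h.q_isUnit with rfl | rfl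
  · rcases le_or_gt |p| 1 with hp | hp <;> nlinarith [sq_abs p, abs_nonneg p]
  · nlinarith [sq_nonneg p]

theorem lucas_two_mul (h : IsLucasPair p q U V) (n : ℤ) : V 2 * V n = V (n + 2) + V (n - 2) := by
  rw [mul_comm, h.lucas_mul_lucas, h.cassini_of_even even_two, one_mul]

theorem lucas_sq_of_odd (h : IsLucasPair p q U V) {n : ℤ} (hn : Odd n) :
    V n ^ 2 = V (2 * n) + 2 * q := by
  have := h.lucas_mul_lucas n n
  rw [sub_self, h.lucas_zero, h.cassini_of_odd hn] at this
  linear_combination (norm := ring_nf) this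

theorem disc_mul_fib_sq_of_odd (h : IsLucasPair p q U V) {n : ℤ} (hn : Odd n) :
    (p ^ 2 - 4 * q) * U n ^ 2 = V (2 * n) - 2 * q := by
  have := h.disc_mul_fib_mul_fib n n
  rw [sub_self, h.lucas_zero, h.cassini_of_odd hn] at this
  linear_combination (norm := ring_nf) this

theorem fib_succ_mul_lucas_pred (h : IsLucasPair p q U V) {n : ℤ} (hn : Even n) :
    U (n + 1) * V (n - 1) = U (2 * n) + p * q := by
  have := h.fib_mul_lucas (n + 1) (n - 1)
  rw [h.cassini_of_odd (hn.sub_odd odd_one), show n + 1 - (n - 1) = 2 by ring, h.fib_two] at this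
  linear_combination (norm := ring_nf) this

theorem lucas_two_mul_alternating_sum_sq (h : IsLucasPair p q U V) (k : ℤ) (N : ℕ) :
    V 2 * ∑ i ∈ Finset.range N, (-1) ^ i * V (2 * k - 1 + 2 * i) ^ 2 =
      V (4 * k - 4) + q * V 2 - (-1) ^ N * (V (4 * k - 4 + 4 * N) + q * V 2) := by
  set f : ℕ → ℤ := fun i => V (4 * k - 4 + 4 * i) + q * V 2
  have hf (i : ℕ) :
      V 2 * ((-1) ^ i * V (2 * k - 1 + 2 * i) ^ 2) = (-1) ^ i * (f i + f (i + 1)) := by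
    rw [h.lucas_sq_of_odd ⟨k + i - 1, by ring⟩]
    have := h.lucas_two_mul (4 * k - 2 + 4 * i)
    simp only [f]
    push_cast
    linear_combination (norm := ring_nf) (-1) ^ i * this
  rw [Finset.mul_sum, Finset.sum_congr rfl fun i _ => hf i, Finset.sum_range_neg_one_pow_mul_add]
  simp [f]

theorem lucas_two_mul_alternating_sum_sq_odd (h : IsLucasPair p q U V) (k : ℤ) (m : ℕ) :
    V 2 * ∑ i ∈ Finset.range (2 * m + 1), (-1) ^ i * V (2 * k - 1 + 2 * i) ^ 2 =
      2 * q * V 2 + V (4 * m + 2) * V (4 * k + 4 * m - 2) := by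
  have := h.lucas_mul_lucas (4 * k + 4 * m - 2) (4 * m + 2)
  rw [h.cassini_of_even ⟨2 * m + 1, by ring⟩, one_mul] at this
  rw [h.lucas_two_mul_alternating_sum_sq, Odd.neg_one_pow ⟨m, rfl⟩]
  push_cast
  linear_combination (norm := ring_nf) -this

theorem lucas_two_mul_alternating_sum_sq_even (h : IsLucasPair p q U V) (k : ℤ) (m : ℕ) :
    V 2 * ∑ i ∈ Finset.range (2 * m + 2), (-1) ^ i * V (2 * k - 1 + 2 * i) ^ 2 =
      -((p ^ 2 - 4 * q) * (U (4 * m + 4) * U (4 * k + 4 * m))) := by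
  have := h.disc_mul_fib_mul_fib (4 * k + 4 * m) (4 * m + 4)
  rw [h.cassini_of_even ⟨2 * m + 2, by ring⟩, one_mul] at this
  rw [h.lucas_two_mul_alternating_sum_sq, Even.neg_one_pow ⟨m + 1, by ring⟩]
  push_cast
  linear_combination (norm := ring_nf) this

end IsLucasPair

theorem stmt_16_general (p q : ℤ)
    (U V : ℤ → ℤ)
    (hU0 : U 0 = 0) (hU1 : U 1 = 1)
    (hUrec : ∀ n : ℤ, U n = p * U (n - 1) - q * U (n - 2))
    (hV0 : V 0 = 2) (hV1 : V 1 = p)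
    (hVrec : ∀ n : ℤ, V n = p * V (n - 1) - q * V (n - 2))
    (c d : ℤ → ℤ) (hc : ∀ n : ℤ, U 4 * c n = U (4 * n + 4)) (hd : ∀ n : ℤ, V 2 * d n = V (4 * n + 2))
    (k : ℤ) (m : ℕ) :
    -2 * q * (1 + d m) + (∑ i ∈ Finset.range (2 * m + 1), (-1 : ℤ) ^ i * V (2 * k - 1 + 2 * i) ^ 2) =
        (p ^ 2 - 4 * q) * d m * U (2 * k + 2 * m - 1) ^ 2 ∧
      -(p ^ 2 * q * (p ^ 2 - 4 * q) * c m) + (∑ i ∈ Finset.range (2 * m + 2), (-1 : ℤ) ^ i * V (2 * k - 1 + 2 * i) ^ 2) =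
        -(p * (p ^ 2 - 4 * q) * c m * (U (2 * k + 2 * m + 1) * V (2 * k + 2 * m - 1))) := by
  have h : IsLucasPair p q U V := ⟨hU0, hU1, hUrec, hV0, hV1, hVrec⟩
  have hcm : p * V 2 * c m = U (4 * m + 4) := by rw [← h.fib_four]; exact hc m
  refine ⟨mul_left_cancel₀ h.lucas_two_ne_zero ?_, mul_left_cancel₀ h.lucas_two_ne_zero ?_⟩
  · linear_combination (norm := ring_nf) h.lucas_two_mul_alternating_sum_sq_odd k m -
      V 2 * d m * h.disc_mul_fib_sq_of_odd (n := 2 * k + 2 * m - 1) ⟨k + m - 1, by ring⟩ -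
      V (4 * k + 4 * m - 2) * hd m
  · linear_combination (norm := ring_nf) h.lucas_two_mul_alternating_sum_sq_even k m +
      V 2 * p * (p ^ 2 - 4 * q) * c m *
        h.fib_succ_mul_lucas_pred (n := 2 * k + 2 * m) ⟨k + m, by ring⟩ +
      (p ^ 2 - 4 * q) * U (4 * k + 4 * m) * hcm

theorem stmt_16 (p q : ℤ) (hp : p ≠ 0) (hq : q = 1 ∨ q = -1)
    (hΔ : p ^ 2 - 4 * q ≠ 0)
    (U V : ℤ → ℤ)
    (hU0 : U 0 = 0) (hU1 : U 1 = 1)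
    (hUrec : ∀ n : ℤ, U n = p * U (n - 1) - q * U (n - 2))
    (hV0 : V 0 = 2) (hV1 : V 1 = p)
    (hVrec : ∀ n : ℤ, V n = p * V (n - 1) - q * V (n - 2))
    (c d : ℤ → ℤ) (hc : ∀ n : ℤ, U 4 * c n = U (4 * n + 4)) (hd : ∀ n : ℤ, V 2 * d n = V (4 * n + 2))
    (k : ℤ) (m : ℕ) :
    -2 * q * (1 + d m) + (∑ i ∈ Finset.range (2 * m + 1), (-1 : ℤ) ^ i * V (2 * k - 1 + 2 * i) ^ 2) =
        (p ^ 2 - 4 * q) * d m * U (2 * k + 2 * m - 1) ^ 2 ∧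
      -(p ^ 2 * q * (p ^ 2 - 4 * q) * c m) + (∑ i ∈ Finset.range (2 * m + 2), (-1 : ℤ) ^ i * V (2 * k - 1 + 2 * i) ^ 2) =
        -(p * (p ^ 2 - 4 * q) * c m * (U (2 * k + 2 * m + 1) * V (2 * k + 2 * m - 1))) :=
  stmt_16_general p q U V hU0 hU1 hUrec hV0 hV1 hVrec c d hc hd k m
end
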